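/- arXiv:1601.02572 — 10 statements merged into one kernel-verified Lean document; each statement's English description precedes it below -/
import Mathlib

section
/- Let A be a free abelian group of finite rank with a negative definite symmetric bilinear form given by a graph G (intersection matrix I with I_{vv} = -b_v and I_{vw} = number of edges between v,w). For each vertex v define the dual cycle E_v^* ∈ A ⊗ ℚ by (E_v^*, E_w) = -δ_{vw}. Then every entry m_w(E_v^*) = -I^{-1}_{vw} of the inverse intersection matrix is strictly positive, provided G is connected. -/
/-- Let `I` be the intersection matrix of a connected plumbing graph (symmetric,
`I v w ≥ 0` the number of edges for `v ≠ w`) which is negative definite.  The dual cycles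
`E_v^*` are defined by `(E_v^*, E_w) = -δ_{vw}`, i.e. `E_v^* = ∑_w (-I⁻¹_{vw}) E_w`.
Then every entry `m_w(E_v^*) = -I⁻¹_{vw}` is strictly positive; equivalently every entry of
the inverse intersection matrix is strictly negative. -/
theorem stmt1 {V : Type*} [Fintype V] [DecidableEq V] [Nonempty V]
    (I : Matrix V V ℤ)
    (hsym : I.IsSymm)
    (hoff : ∀ v w : V, v ≠ w → 0 ≤ I v w)
    (hnegdef : ∀ x : V → ℚ, x ≠ 0 → ∑ v, ∑ w, x v * (I v w : ℚ) * x w < 0)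
    (hconn : ∀ v w : V, Relation.ReflTransGen (fun a b : V => a ≠ b ∧ I a b ≠ 0) v w) :
    ∀ v w : V, (I.map ((↑) : ℤ → ℚ))⁻¹ v w < 0 := by
  classical
  set J := I.map ((↑) : ℤ → ℚ) with hJdef
  have hJab : ∀ a b, J a b = (I a b : ℚ) := fun a b => rfl
  have hJsym : ∀ a b, J a b = J b a := by
    intro a b
    have := hsym.apply a b
    simp only [hJab]
    exact_mod_cast this.symm
  have hJoff : ∀ a b, a ≠ b → 0 ≤ J a b := by
    intro a b h
    rw [hJab]
    exact_mod_cast hoff a b h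
  have hneg : ∀ x : V → ℚ, x ≠ 0 → ∑ a, ∑ b, x a * J a b * x b < 0 := hnegdef
  -- J is invertible
  have hunit : IsUnit J.det := by
    rw [isUnit_iff_ne_zero]
    intro hdet
    obtain ⟨x, hx0, hx⟩ := Matrix.exists_mulVec_eq_zero_iff.2 hdet
    have : ∑ a, ∑ b, x a * J a b * x b = 0 := by
      have : ∀ a, ∑ b, x a * J a b * x b = x a * (J.mulVec x a) := by
        intro a
        rw [Matrix.mulVec, dotProduct, Finset.mul_sum]
        exact Finset.sum_congr rfl fun b _ => by ring
      rw [Finset.sum_congr rfl fun a _ => this a]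
      simp [hx]
    exact absurd this (ne_of_lt (hneg x hx0))
  have hinv : J⁻¹ * J = 1 := Matrix.nonsing_inv_mul J hunit
  intro v w
  set x : V → ℚ := fun b => J⁻¹ v b with hxdef
  have hS : ∀ a, ∑ b, J a b * x b = if a = v then 1 else 0 := by
    intro a
    have h1 : ∑ b, J⁻¹ v b * J b a = (1 : Matrix V V ℚ) v a := by
      rw [← Matrix.mul_apply, hinv]
    rw [Matrix.one_apply] at h1
    calc ∑ b, J a b * x b = ∑ b, J⁻¹ v b * J b a := by
          exact Finset.sum_congr rfl fun b _ => by rw [hJsym a b]; ring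
      _ = if v = a then 1 else 0 := h1
      _ = if a = v then 1 else 0 := by
          rcases eq_or_ne a v with rfl|h
          · simp
          · simp [h, Ne.symm h]
  -- positive part
  set y : V → ℚ := fun a => max (x a) 0 with hydef
  set z : V → ℚ := fun a => max (-x a) 0 with hzdef
  have hy0 : ∀ a, 0 ≤ y a := fun a => le_max_right _ _
  have hz0 : ∀ a, 0 ≤ z a := fun a => le_max_right _ _
  have hyz : ∀ a, y a = x a + z a := by
    intro a
    rcases le_total (x a) 0 with h|h
    · simp [hydef, hzdef, max_eq_right h, max_eq_left (neg_nonneg.2 h)]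
    · simp [hydef, hzdef, max_eq_left h, max_eq_right (neg_nonpos.2 h)]
  have hmul : ∀ a, y a * z a = 0 := by
    intro a
    rcases le_total (x a) 0 with h|h
    · simp [hydef, max_eq_right h]
    · simp [hzdef, max_eq_right (neg_nonpos.2 h)]
  have hxle : ∀ a, x a ≤ 0 := by
    by_contra hcon
    push_neg at hcon
    have hyne : y ≠ 0 := by
      obtain ⟨a, ha⟩ := hcon
      intro h0
      have : y a = 0 := congrFun h0 a
      rw [hydef] at this
      have h2 : x a ≤ 0 := max_eq_right_iff.mp this
      linarith
    have hQ : 0 ≤ ∑ a, ∑ b, y a * J a b * y b := by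
      have hsplit : ∑ a, ∑ b, y a * J a b * y b
          = (∑ a, y a * (∑ b, J a b * x b)) + ∑ a, ∑ b, y a * J a b * z b := by
        rw [← Finset.sum_add_distrib]
        refine Finset.sum_congr rfl fun a _ => ?_
        rw [Finset.mul_sum, ← Finset.sum_add_distrib]
        refine Finset.sum_congr rfl fun b _ => ?_
        rw [hyz b]; ring
      rw [hsplit]
      have h1 : 0 ≤ ∑ a, y a * (∑ b, J a b * x b) := by
        refine Finset.sum_nonneg fun a _ => ?_
        rw [hS a]
        rcases eq_or_ne a v with h|h <;> simp [h, hy0]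
      have h2 : 0 ≤ ∑ a, ∑ b, y a * J a b * z b := by
        refine Finset.sum_nonneg fun a _ => Finset.sum_nonneg fun b _ => ?_
        rcases eq_or_ne a b with rfl|h
        · have : y a * J a a * z a = J a a * (y a * z a) := by ring
          rw [this, hmul a, mul_zero]
        · exact mul_nonneg (mul_nonneg (hy0 a) (hJoff a b h)) (hz0 b)
      linarith
    exact absurd (hneg y hyne) (not_lt.2 hQ)
  -- strictness via connectivity
  have hterm : ∀ a b, b ≠ a → J a b * x b ≤ 0 :=
    fun a b h => mul_nonpos_of_nonneg_of_nonpos (hJoff a b (Ne.symm h)) (hxle b)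
  have hxv : x v ≠ 0 := by
    intro h0
    have hS' := hS v
    rw [if_pos rfl] at hS'
    have : ∑ b, J v b * x b = J v v * x v + ∑ b ∈ Finset.univ.erase v, J v b * x b :=
      (Finset.add_sum_erase _ _ (Finset.mem_univ v)).symm
    rw [this, h0, mul_zero, zero_add] at hS'
    have : ∑ b ∈ Finset.univ.erase v, J v b * x b ≤ 0 :=
      Finset.sum_nonpos fun b hb => hterm v b (Finset.ne_of_mem_erase hb)
    linarith
  have hzero : ∀ a, x a = 0 → ∀ b, b ≠ a → J a b ≠ 0 → x b = 0 := by
    intro a ha b hba hJ0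
    rcases eq_or_ne a v with rfl|hav
    · exact absurd ha hxv
    have hS' := hS a
    rw [if_neg hav] at hS'
    have hsplit : ∑ c, J a c * x c = J a a * x a + ∑ c ∈ Finset.univ.erase a, J a c * x c :=
      (Finset.add_sum_erase _ _ (Finset.mem_univ a)).symm
    rw [hsplit, ha, mul_zero, zero_add] at hS'
    have hall := (Finset.sum_eq_zero_iff_of_nonpos
      (fun c hc => hterm a c (Finset.ne_of_mem_erase hc))).1 hS'
    have := hall b (Finset.mem_erase.2 ⟨hba, Finset.mem_univ b⟩)
    rcases mul_eq_zero.1 this with h|h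
    · exact absurd h hJ0
    · exact h
  have hxw : x w ≠ 0 := by
    intro hw0
    have hprop : ∀ b, Relation.ReflTransGen (fun p q : V => p ≠ q ∧ I p q ≠ 0) w b → x b = 0 := by
      intro b h
      induction h with
      | refl => exact hw0
      | tail _ hbc ih =>
        refine hzero _ ih _ (Ne.symm hbc.1) ?_
        rw [hJab]
        exact_mod_cast hbc.2
    exact hxv (hprop v (hconn w v))
  exact lt_of_le_of_ne (hxle w) hxw
end

section
/- Let L = ℤ^𝒱 be the lattice of a connected negative definite graph G. Then the set 𝒮_top \ {0} of nonzero elements of the Lipman cone contains a unique minimal element Z_min (Artin's minimal cycle) with respect to the coordinatewise partial order. -/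
open Finset

private -- closure of Lipman cone under pointwise min
theorem meet_mem {V : Type*} [Fintype V] [DecidableEq V]
    (I : Matrix V V ℤ) (hoff : ∀ v w : V, v ≠ w → 0 ≤ I v w)
    (Z1 Z2 : V → ℤ) (h1 : ∀ v, ∑ w, I v w * Z1 w ≤ 0) (h2 : ∀ v, ∑ w, I v w * Z2 w ≤ 0) :
    ∀ v, ∑ w, I v w * min (Z1 w) (Z2 w) ≤ 0 := by
  intro v
  rcases le_total (Z1 v) (Z2 v) with h | h
  · calc ∑ w, I v w * min (Z1 w) (Z2 w) ≤ ∑ w, I v w * Z1 w := by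
          apply Finset.sum_le_sum
          intro w _
          rcases eq_or_ne w v with rfl | hw
          · rw [min_eq_left h]
          · exact mul_le_mul_of_nonneg_left (min_le_left _ _) (hoff v w hw.symm)
      _ ≤ 0 := h1 v
  · calc ∑ w, I v w * min (Z1 w) (Z2 w) ≤ ∑ w, I v w * Z2 w := by
          apply Finset.sum_le_sum
          intro w _
          rcases eq_or_ne w v with rfl | hw
          · rw [min_eq_right h]
          · exact mul_le_mul_of_nonneg_left (min_le_right _ _) (hoff v w hw.symm)
      _ ≤ 0 := h2 v

private theorem cone_nonneg {V : Type*} [Fintype V] [DecidableEq V]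
    (I : Matrix V V ℤ) (hoff : ∀ v w : V, v ≠ w → 0 ≤ I v w)
    (hnegdef : ∀ x : V → ℚ, x ≠ 0 → ∑ v, ∑ w, x v * (I v w : ℚ) * x w < 0)
    (Z : V → ℤ) (hZ : ∀ v, ∑ w, I v w * Z w ≤ 0) : ∀ v, 0 ≤ Z v := by
  by_contra hcon
  push_neg at hcon
  obtain ⟨v0, hv0⟩ := hcon
  set x : V → ℤ := fun v => max (-Z v) 0 with hxdef
  set p : V → ℤ := fun v => max (Z v) 0 with hpdef
  have hxnn : ∀ v, 0 ≤ x v := fun v => le_max_right _ _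
  have hpnn : ∀ v, 0 ≤ p v := fun v => le_max_right _ _
  have hxp : ∀ w, x w = p w - Z w := by intro w; simp only [hxdef, hpdef]; omega
  have hxp0 : ∀ v, x v * p v = 0 := by intro v; simp only [hxdef, hpdef]; rcases le_total (Z v) 0 with h | h
                                       · rw [max_eq_right h, mul_zero]
                                       · rw [max_eq_right (neg_nonpos_of_nonneg h), zero_mul]
  -- the main integer inequality
  have hterm : ∀ v w, 0 ≤ x v * I v w * p w := by
    intro v w
    rcases eq_or_ne v w with rfl | hvw
    · have : x v * I v v * p v = x v * p v * I v v := by ring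
      rw [this, hxp0, zero_mul]
    · exact mul_nonneg (mul_nonneg (hxnn v) (hoff v w hvw)) (hpnn w)
  have hA : (0:ℤ) ≤ ∑ v, ∑ w, x v * I v w * p w :=
    Finset.sum_nonneg fun v _ => Finset.sum_nonneg fun w _ => hterm v w
  have hB : (∑ v, ∑ w, x v * (I v w * Z w)) ≤ 0 := by
    apply Finset.sum_nonpos
    intro v _
    rw [← Finset.mul_sum]
    exact mul_nonpos_of_nonneg_of_nonpos (hxnn v) (hZ v)
  have hS : (0:ℤ) ≤ ∑ v, ∑ w, x v * I v w * x w := by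
    have hrw : ∀ v w : V, x v * I v w * x w = x v * I v w * p w - x v * (I v w * Z w) := by
      intro v w; rw [hxp w]; ring
    calc (0:ℤ) ≤ (∑ v, ∑ w, x v * I v w * p w) - ∑ v, ∑ w, x v * (I v w * Z w) := by
          linarith
      _ = ∑ v, ∑ w, x v * I v w * x w := by
          rw [← Finset.sum_sub_distrib]
          apply Finset.sum_congr rfl
          intro v _
          rw [← Finset.sum_sub_distrib]
          exact Finset.sum_congr rfl fun w _ => (hrw v w).symm
  -- cast to ℚ
  have hxne : (fun v => (x v : ℚ)) ≠ 0 := by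
    intro h0
    have h1 : (x v0 : ℚ) = 0 := congrFun h0 v0
    have h2 : x v0 = 0 := by exact_mod_cast h1
    have h3 : -Z v0 ≤ x v0 := le_max_left _ _
    omega
  have hQ := hnegdef _ hxne
  have hcast : ∑ v, ∑ w, ((x v : ℚ)) * (I v w : ℚ) * (x w : ℚ)
      = ((∑ v, ∑ w, x v * I v w * x w : ℤ) : ℚ) := by
    push_cast
    rfl
  rw [hcast] at hQ
  have : ((∑ v, ∑ w, x v * I v w * x w : ℤ) : ℚ) < 0 := hQ
  have : (∑ v, ∑ w, x v * I v w * x w : ℤ) < 0 := by exact_mod_cast this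
  omega

private theorem cone_pos {V : Type*} [Fintype V] [DecidableEq V]
    (I : Matrix V V ℤ) (hoff : ∀ v w : V, v ≠ w → 0 ≤ I v w)
    (hconn : ∀ v w : V, Relation.ReflTransGen (fun a b : V => a ≠ b ∧ I a b ≠ 0) v w)
    (Z : V → ℤ) (hnn : ∀ v, 0 ≤ Z v)
    (hZ : ∀ v, ∑ w, I v w * Z w ≤ 0) (hne : Z ≠ 0) : ∀ v, 1 ≤ Z v := by
  have hzero : ∀ v, Z v = 0 → ∀ w, I v w ≠ 0 → Z w = 0 := by
    intro v hv w hIw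
    have hfnn : ∀ u ∈ Finset.univ, 0 ≤ I v u * Z u := by
      intro u _
      rcases eq_or_ne u v with rfl | hu
      · rw [hv, mul_zero]
      · exact mul_nonneg (hoff v u hu.symm) (hnn u)
    have hsum0 : ∑ u, I v u * Z u = 0 := le_antisymm (hZ v) (Finset.sum_nonneg hfnn)
    have := (Finset.sum_eq_zero_iff_of_nonneg hfnn).mp hsum0 w (Finset.mem_univ w)
    rcases mul_eq_zero.mp this with h | h
    · exact absurd h hIw
    · exact h
  have hprop : ∀ a b : V, Relation.ReflTransGen (fun a b : V => a ≠ b ∧ I a b ≠ 0) a b →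
      Z a = 0 → Z b = 0 := by
    intro a b h
    induction h with
    | refl => exact id
    | tail _ hstep ih => intro ha; exact hzero _ (ih ha) _ hstep.2
  obtain ⟨w0, hw0⟩ := Function.ne_iff.mp hne
  intro v
  rcases eq_or_lt_of_le (hnn v) with h0 | h1
  · exact absurd (hprop v w0 (hconn v w0) h0.symm) (by simpa using hw0)
  · omega

private theorem cone_exists {V : Type*} [Fintype V] [DecidableEq V] [Nonempty V]
    (I : Matrix V V ℤ)
    (hnegdef : ∀ x : V → ℚ, x ≠ 0 → ∑ v, ∑ w, x v * (I v w : ℚ) * x w < 0) :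
    ∃ Z : V → ℤ, (∀ v, ∑ w, I v w * Z w ≤ 0) ∧ Z ≠ 0 := by
  classical
  set J : Matrix V V ℚ := I.map (fun n => (n : ℚ)) with hJ
  have hinj : Function.Injective J.mulVecLin := by
    rw [← LinearMap.ker_eq_bot, LinearMap.ker_eq_bot']
    intro x hx0
    by_contra hxne
    have hQ := hnegdef x hxne
    have heq0 : ∑ v, ∑ w, x v * (I v w : ℚ) * x w = 0 := by
      have hmv : ∀ v, ∑ w, (J v w) * x w = 0 := by
        intro v
        have : J.mulVec x v = 0 := by rw [show J.mulVec x = J.mulVecLin x from rfl, hx0]; rfl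
        simpa [Matrix.mulVec, dotProduct] using this
      calc ∑ v, ∑ w, x v * (I v w : ℚ) * x w = ∑ v, x v * ∑ w, (J v w) * x w := by
            apply Finset.sum_congr rfl
            intro v _
            rw [Finset.mul_sum]
            apply Finset.sum_congr rfl
            intro w _
            simp only [hJ, Matrix.map_apply]
            ring
        _ = 0 := by simp [hmv]
    linarith
  have hsurj : Function.Surjective J.mulVecLin :=
    (LinearMap.injective_iff_surjective).mp hinj
  obtain ⟨x, hxeq⟩ := hsurj (fun _ => (-1 : ℚ))
  have hmv : ∀ v, ∑ w, (I v w : ℚ) * x w = -1 := by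
    intro v
    have : J.mulVec x v = -1 := by
      rw [show J.mulVec x = J.mulVecLin x from rfl, hxeq]
    simpa [Matrix.mulVec, dotProduct, hJ, Matrix.map_apply] using this
  -- clear denominators
  set N : ℕ := ∏ v, (x v).den with hN
  have hNpos : 0 < N := Finset.prod_pos fun v _ => (x v).pos
  have hd : ∀ v, (x v).den ∣ N := fun v => Finset.dvd_prod_of_mem _ (Finset.mem_univ v)
  set Z : V → ℤ := fun v => ((N / (x v).den : ℕ) : ℤ) * (x v).num with hZdef
  have key : ∀ v, ((Z v : ℚ)) = (N : ℚ) * x v := by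
    intro v
    have hdd : ((x v).den : ℚ) ≠ 0 := by exact_mod_cast (x v).pos.ne'
    have h1 : ((N / (x v).den : ℕ) : ℚ) * ((x v).den : ℚ) = (N : ℚ) := by
      exact_mod_cast Nat.div_mul_cancel (hd v)
    have h2 : ((x v).num : ℚ) = x v * ((x v).den : ℚ) :=
      (div_eq_iff hdd).mp (Rat.num_div_den (x v))
    calc ((Z v : ℚ)) = ((N / (x v).den : ℕ) : ℚ) * ((x v).num : ℚ) := by
          simp only [hZdef, Int.cast_mul, Int.cast_natCast]
      _ = ((N / (x v).den : ℕ) : ℚ) * ((x v).den : ℚ) * x v := by rw [h2]; ring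
      _ = (N : ℚ) * x v := by rw [h1]
  have hsum : ∀ v, ((∑ w, I v w * Z w : ℤ) : ℚ) = -(N : ℚ) := by
    intro v
    push_cast
    calc ∑ w, (I v w : ℚ) * (Z w : ℚ) = (N : ℚ) * ∑ w, (I v w : ℚ) * x w := by
          rw [Finset.mul_sum]
          apply Finset.sum_congr rfl
          intro w _
          rw [key w]; ring
      _ = -(N : ℚ) := by rw [hmv v]; ring
  refine ⟨Z, ?_, ?_⟩
  · intro v
    have : ((∑ w, I v w * Z w : ℤ) : ℚ) ≤ 0 := by
      rw [hsum v]
      simp [Nat.cast_nonneg]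
    exact_mod_cast this
  · intro h0
    obtain ⟨v⟩ := ‹Nonempty V›
    have h1 : ((∑ w, I v w * Z w : ℤ) : ℚ) = -(N : ℚ) := hsum v
    rw [h0] at h1
    simp at h1
    exact absurd h1 (by exact_mod_cast hNpos.ne')

/-- Let `L = ℤ^𝒱` be the lattice of a connected negative definite graph, with Lipman cone
`𝒮_top = {Z : (Z,E_v) ≤ 0 ∀ v}`.  Then `𝒮_top \ {0}` contains a unique minimal element
`Z_min` (Artin's minimal / fundamental cycle) with respect to the coordinatewise order. -/
theorem stmt3 {V : Type*} [Fintype V] [DecidableEq V] [Nonempty V]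
    (I : Matrix V V ℤ)
    (hsym : I.IsSymm)
    (hdiag : ∀ v : V, I v v < 0)
    (hoff : ∀ v w : V, v ≠ w → 0 ≤ I v w)
    (hnegdef : ∀ x : V → ℚ, x ≠ 0 → ∑ v, ∑ w, x v * (I v w : ℚ) * x w < 0)
    (hconn : ∀ v w : V, Relation.ReflTransGen (fun a b : V => a ≠ b ∧ I a b ≠ 0) v w) :
    ∃! Zmin : V → ℤ,
      ((∀ v : V, ∑ w, I v w * Zmin w ≤ 0) ∧ Zmin ≠ 0) ∧
      ∀ Z : V → ℤ, (∀ v : V, ∑ w, I v w * Z w ≤ 0) → Z ≠ 0 → Zmin ≤ Z := by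
  classical
  -- strict positivity of nonzero cone elements
  have hpos : ∀ Z : V → ℤ, (∀ v, ∑ w, I v w * Z w ≤ 0) → Z ≠ 0 → ∀ v, 1 ≤ Z v := by
    intro Z hZ hne
    exact cone_pos I hoff hconn Z (cone_nonneg I hoff hnegdef Z hZ) hZ hne
  obtain ⟨Z0, hZ0cone, hZ0ne⟩ := cone_exists I hnegdef
  set P : ℕ → Prop :=
    fun n => ∃ Z : V → ℤ, (∀ v, ∑ w, I v w * Z w ≤ 0) ∧ Z ≠ 0 ∧ ∑ v, Z v = (n : ℤ) with hP
  have hP0 : P (∑ v, Z0 v).toNat := by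
    refine ⟨Z0, hZ0cone, hZ0ne, ?_⟩
    rw [Int.toNat_of_nonneg]
    exact Finset.sum_nonneg fun v _ => le_trans zero_le_one (hpos Z0 hZ0cone hZ0ne v)
  have hex : ∃ n, P n := ⟨_, hP0⟩
  obtain ⟨Zmin, hmincone, hminne, hminsum⟩ := Nat.find_spec hex
  have hminimal : ∀ Z : V → ℤ, (∀ v, ∑ w, I v w * Z w ≤ 0) → Z ≠ 0 → Zmin ≤ Z := by
    intro Z hZcone hZne
    set M : V → ℤ := fun v => min (Zmin v) (Z v) with hM
    have hMcone : ∀ v, ∑ w, I v w * M w ≤ 0 := meet_mem I hoff Zmin Z hmincone hZcone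
    have hMpos : ∀ v, 1 ≤ M v := fun v =>
      le_min (hpos Zmin hmincone hminne v) (hpos Z hZcone hZne v)
    have hMne : M ≠ 0 := by
      intro h0
      obtain ⟨v⟩ := ‹Nonempty V›
      have := hMpos v
      rw [h0] at this
      simp at this
    have hMnn : (0:ℤ) ≤ ∑ v, M v := Finset.sum_nonneg fun v _ => le_trans zero_le_one (hMpos v)
    have hPM : P (∑ v, M v).toNat := ⟨M, hMcone, hMne, by rw [Int.toNat_of_nonneg hMnn]⟩
    have hfind : Nat.find hex ≤ (∑ v, M v).toNat := Nat.find_min' hex hPM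
    have hle : ∑ v, Zmin v ≤ ∑ v, M v := by
      rw [hminsum]
      calc ((Nat.find hex : ℕ) : ℤ) ≤ (((∑ v, M v).toNat : ℕ) : ℤ) := by exact_mod_cast hfind
        _ = ∑ v, M v := Int.toNat_of_nonneg hMnn
    have hge : ∀ v ∈ Finset.univ, M v ≤ Zmin v := fun v _ => min_le_left _ _
    have heq : ∀ v ∈ Finset.univ, M v = Zmin v :=
      (Finset.sum_eq_sum_iff_of_le hge).mp (le_antisymm (Finset.sum_le_sum hge) hle)
    intro v
    have := heq v (Finset.mem_univ v)
    calc Zmin v = M v := (this).symm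
      _ ≤ Z v := min_le_right _ _
  refine ⟨Zmin, ⟨⟨hmincone, hminne⟩, hminimal⟩, ?_⟩
  rintro Y ⟨⟨hYcone, hYne⟩, hYmin⟩
  exact le_antisymm (hYmin Zmin hmincone hminne) (hminimal Y hYcone hYne)
end

section
/- Let F ⊂ ℝ² be an empty integral polygon with edges S, and for each edge let ℓ_S be the support function of S with respect to F (primitive integral affine with ℓ_S|_S = 0, ℓ_S ≥ 0 on F) and c_S the lattice length of S. Then the weighted sum Σ_{S ⊂ ∂F} c_S ℓ_S is a constant function on ℝ². -/
/-!
Orient each edge `S = [t, h]` of `F` so that `F` lies to its left. As `ℓ_S` is primitive and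
`c_S` is the lattice length of `S`, `c_S ℓ_S (x) = det (h - t, x - t)`, whose linear part is
`x ↦ det (h - t, x)`. At every vertex of the convex polygon `F` exactly one oriented edge ends and
exactly one starts, so the oriented edges form closed cycles and `∑ (h - t) = 0`: the linear part
of `∑ c_S ℓ_S` vanishes.
-/

/-- A point of `ℝ²` is a lattice point if all its coordinates are integers. -/
def IsLatticePt (x : Fin 2 → ℝ) : Prop := ∀ i, ∃ m : ℤ, x i = (m : ℝ)

/-- The inclusion `ℤ² → ℝ²`. -/
def castPt (p : Fin 2 → ℤ) : Fin 2 → ℝ := fun i => (p i : ℝ)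

/-- The integral affine function on `ℝ²` with linear coefficients `c : Fin 2 → ℤ` and
constant term `d : ℤ`. -/
def affZ (c : Fin 2 → ℤ) (d : ℤ) (x : Fin 2 → ℝ) : ℝ :=
  (c 0 : ℝ) * x 0 + (c 1 : ℝ) * x 1 + (d : ℝ)

open Filter Topology

theorem IsPreconnected.inter_frontier_nonempty {X : Type*} [TopologicalSpace X] {s t : Set X}
    (hs : IsPreconnected s) (hst : (s ∩ t).Nonempty) (hst' : (s \ t).Nonempty) :
    (s ∩ frontier t).Nonempty := by
  by_contra! h
  have hcover : s ⊆ interior t ∪ interior tᶜ := fun x hx => by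
    by_contra hx'
    rw [interior_compl, Set.mem_union, Set.mem_compl_iff, not_or, not_not] at hx'
    exact h.subset ⟨hx, hx'.2, hx'.1⟩
  have hin : ∀ x ∈ s, x ∈ t → x ∈ interior t := fun x hx hxt =>
    (hcover hx).resolve_right fun hx' => interior_subset hx' hxt
  have hout : ∀ x ∈ s, x ∉ t → x ∈ interior tᶜ := fun x hx hxt =>
    (hcover hx).resolve_left fun hx' => hxt (interior_subset hx')
  obtain ⟨x, -, hxt, hxt'⟩ := hs _ _ isOpen_interior isOpen_interior hcover
    (hst.imp fun x hx => ⟨hx.1, hin x hx.1 hx.2⟩) (hst'.imp fun x hx => ⟨hx.1, hout x hx.1 hx.2⟩)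
  exact interior_subset hxt' (interior_subset hxt)

theorem Finset.sum_eq_sum_of_injOn_of_image_subset {ι M : Type*} [AddCommMonoid M] [DecidableEq M]
    {s : Finset ι} {f g : ι → M} (hf : Set.InjOn f s) (hg : Set.InjOn g s)
    (hfg : s.image f ⊆ s.image g) : ∑ i ∈ s, f i = ∑ i ∈ s, g i := by
  have himage : s.image f = s.image g := Finset.eq_of_subset_of_card_le hfg <| by
    rw [Finset.card_image_of_injOn hf, Finset.card_image_of_injOn hg]
  calc ∑ i ∈ s, f i = ∑ x ∈ s.image f, x := (Finset.sum_image (f := fun x => x) hf).symm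
    _ = ∑ i ∈ s, g i := by rw [himage, Finset.sum_image hg]

def det2 : (Fin 2 → ℝ) →ₗ[ℝ] (Fin 2 → ℝ) →ₗ[ℝ] ℝ :=
  LinearMap.mk₂ ℝ (fun a b => a 0 * b 1 - a 1 * b 0)
    (fun _ _ _ => by simp only [Pi.add_apply]; ring)
    (fun _ _ _ => by simp only [Pi.smul_apply, smul_eq_mul]; ring)
    (fun _ _ _ => by simp only [Pi.add_apply]; ring)
    (fun _ _ _ => by simp only [Pi.smul_apply, smul_eq_mul]; ring)

@[simp] theorem det2_apply (a b : Fin 2 → ℝ) : det2 a b = a 0 * b 1 - a 1 * b 0 := rfl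

@[simp] theorem det2_self (a : Fin 2 → ℝ) : det2 a a = 0 := by
  rw [det2_apply]; ring

theorem det2_swap (a b : Fin 2 → ℝ) : det2 b a = -det2 a b := by
  simp only [det2_apply]; ring

theorem exists_eq_smul_of_det2_eq_zero {a b : Fin 2 → ℝ} (ha : a ≠ 0) (h : det2 a b = 0) :
    ∃ l : ℝ, b = l • a := by
  have hnorm : a 0 ^ 2 + a 1 ^ 2 ≠ 0 := by
    contrapose! ha
    funext i
    fin_cases i <;> simp only [Fin.zero_eta, Fin.mk_one, Fin.isValue, Pi.zero_apply] <;>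
    nlinarith [sq_nonneg (a 0), sq_nonneg (a 1)]
  rw [det2_apply] at h
  refine ⟨(a 0 * b 0 + a 1 * b 1) / (a 0 ^ 2 + a 1 ^ 2), funext fun i => ?_⟩
  fin_cases i
  · simp only [Fin.zero_eta, Fin.isValue, Pi.smul_apply, smul_eq_mul]
    field_simp
    linear_combination (-a 1) * h
  · simp only [Fin.mk_one, Fin.isValue, Pi.smul_apply, smul_eq_mul]
    field_simp
    linear_combination a 0 * h

theorem exists_det2_ne_zero {F : Set (Fin 2 → ℝ)} (hspan : affineSpan ℝ F = ⊤) {a : Fin 2 → ℝ}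
    (ha : a ≠ 0) (v : Fin 2 → ℝ) : ∃ z ∈ F, det2 a (z - v) ≠ 0 := by
  by_contra! h
  have hconst : (det2 a).toAffineMap = AffineMap.const ℝ (Fin 2 → ℝ) (det2 a v) :=
    AffineMap.ext_on hspan fun z hz => sub_eq_zero.1 ((map_sub (det2 a) z v).symm.trans (h z hz))
  have := DFunLike.congr_fun hconst (v + ![-a 1, a 0])
  simp only [LinearMap.coe_toAffineMap, map_add, AffineMap.const_apply, add_eq_left, det2_apply,
    Matrix.cons_val_zero, Matrix.cons_val_one] at this
  apply ha
  funext i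
  fin_cases i <;> simp only [Fin.zero_eta, Fin.mk_one, Fin.isValue, Pi.zero_apply] <;>
    nlinarith [sq_nonneg (a 0), sq_nonneg (a 1)]

theorem eq_of_mem_extremePoints_of_det2_nonneg {F : Set (Fin 2 → ℝ)} (hspan : affineSpan ℝ F = ⊤)
    {σ : ℝ} (hσ : σ ≠ 0) {v a b : Fin 2 → ℝ} (hv : v ∈ F) (ha : a ∈ F.extremePoints ℝ)
    (hb : b ∈ F.extremePoints ℝ) (hav : a ≠ v) (hbv : b ≠ v)
    (hFa : ∀ z ∈ F, 0 ≤ σ * det2 (a - v) (z - v)) (hFb : ∀ z ∈ F, 0 ≤ σ * det2 (b - v) (z - v)) :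
    a = b := by
  have hparallel : det2 (a - v) (b - v) = 0 := by
    have h₁ := hFa b hb.1
    have h₂ := hFb a ha.1
    rw [det2_swap] at h₂
    exact (mul_eq_zero.1 (le_antisymm (by linarith) h₁)).resolve_left hσ
  obtain ⟨l, hl⟩ := exists_eq_smul_of_det2_eq_zero (sub_ne_zero.2 hav) hparallel
  rcases lt_or_ge l 0 with hl0 | hl0
  · -- `a - v` and `b - v` point in opposite directions, which confines `F` to a line
    obtain ⟨z, hz, hdet⟩ := exists_det2_ne_zero hspan (sub_ne_zero.2 hav) v
    have h₁ := hFa z hz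
    have h₂ := hFb z hz
    rw [hl, map_smul, LinearMap.smul_apply, smul_eq_mul] at h₂
    have : σ * det2 (a - v) (z - v) = 0 := le_antisymm (by nlinarith) h₁
    exact absurd ((mul_eq_zero.1 this).resolve_left hσ) hdet
  rw [mem_extremePoints_iff_forall_segment] at ha hb
  rcases le_total l 1 with hl1 | hl1
  · have hmem : b ∈ segment ℝ v a := by
      rw [segment_eq_image']
      exact ⟨l, ⟨hl0, hl1⟩, show v + l • (a - v) = b by rw [← hl, add_sub_cancel]⟩
    exact (hb.2 v hv a ha.1 hmem).resolve_left hbv.symm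
  · have hmem : a ∈ segment ℝ v b := by
      rw [segment_eq_image']
      refine ⟨l⁻¹, ⟨by positivity, inv_le_one_of_one_le₀ hl1⟩, ?_⟩
      show v + l⁻¹ • (b - v) = a
      rw [hl, smul_smul, inv_mul_cancel₀ (by positivity), one_smul, add_sub_cancel]
    exact ((ha.2 v hv b hb.1 hmem).resolve_left hav.symm).symm

theorem mem_closure_frontier_diff_segment {F : Set (Fin 2 → ℝ)} (hconv : Convex ℝ F)
    (hclosed : IsClosed F) (hspan : affineSpan ℝ F = ⊤) {a v : Fin 2 → ℝ}
    (hv : v ∈ F.extremePoints ℝ) (ha : a ∈ F) (hav : a ≠ v) :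
    v ∈ closure (frontier F \ segment ℝ a v) := by
  have hU : v - a ≠ 0 := sub_ne_zero.2 hav.symm
  obtain ⟨z, hz, hdet⟩ := exists_det2_ne_zero hspan hU v
  rw [Metric.mem_closure_iff]
  intro ε hε
  have hnear : ∀ u, ∀ᶠ s in 𝓝[>] (0 : ℝ), v + s • u ∈ Metric.ball v ε := fun u =>
    (((continuous_const.add (continuous_id.smul continuous_const)).tendsto' 0 v
      (by simp)).mono_left nhdsWithin_le_nhds).eventually (Metric.ball_mem_nhds v hε)
  obtain ⟨s, ⟨hp, hq⟩, hs⟩ :=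
    (((hnear (z - v)).and (hnear (v - a))).and (Ioo_mem_nhdsGT one_pos)).exists
  have hpF : v + s • (z - v) ∈ F := hconv.add_smul_sub_mem hv.1 hz ⟨hs.1.le, hs.2.le⟩
  have hs' : 0 < 1 + s := by linarith [hs.1]
  -- `v` lies strictly between `a` and `v + s • (v - a)`
  have hqF : v + s • (v - a) ∉ F := fun hqF => hav <| hv.2 ha hqF
    ⟨s / (1 + s), 1 / (1 + s), div_pos hs.1 hs', div_pos one_pos hs', by field_simp; ring,
      by match_scalars <;> field_simp; ring⟩
  -- the segment from the first point to the second crosses `frontier F` close to `v`, and only its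
  -- endpoint outside `F` lies on the line through `a` and `v`
  obtain ⟨w, hw, hwF⟩ := (convex_segment _ _).isPreconnected.inter_frontier_nonempty
    ⟨_, left_mem_segment ℝ _ _, hpF⟩ ⟨_, right_mem_segment ℝ _ _, hqF⟩
  refine ⟨w, ⟨hwF, fun hwa => ?_⟩, ?_⟩
  · obtain ⟨α, β, -, -, hαβ, rfl⟩ := hw
    obtain rfl : β = 1 - α := by linarith
    have hα : α ≠ 0 := by
      rintro rfl
      rw [zero_smul, zero_add, sub_zero, one_smul] at hwF
      exact hqF (hclosed.frontier_subset hwF)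
    obtain ⟨γ, δ, -, -, hγδ, hw⟩ := hwa
    obtain rfl : δ = 1 - γ := by linarith
    have hline : det2 (v - a) (γ • a + (1 - γ) • v - v) = 0 := by
      rw [show γ • a + (1 - γ) • v - v = (-γ) • (v - a) by module, map_smul, det2_self,
        smul_zero]
    rw [hw, show α • (v + s • (z - v)) + (1 - α) • (v + s • (v - a)) - v
        = (α * s) • (z - v) + ((1 - α) * s) • (v - a) by module] at hline
    simp only [map_add, map_smul, det2_self, smul_eq_mul, mul_zero, add_zero] at hline
    exact hdet ((mul_eq_zero.1 hline).resolve_left (mul_ne_zero hα hs.1.ne'))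
  · rw [dist_comm, ← Metric.mem_ball]
    exact (convex_ball v ε).segment_subset hp hq hw

theorem sum_head_eq_sum_tail {ι : Type*} {F : Set (Fin 2 → ℝ)} (hconv : Convex ℝ F)
    (hclosed : IsClosed F) (hspan : affineSpan ℝ F = ⊤) {E : Finset ι} {t h : ι → Fin 2 → ℝ}
    (hth : ∀ i ∈ E, t i ≠ h i) (ht : ∀ i ∈ E, t i ∈ F.extremePoints ℝ)
    (hh : ∀ i ∈ E, h i ∈ F.extremePoints ℝ)
    (hleft : ∀ i ∈ E, ∀ z ∈ F, 0 ≤ det2 (h i - t i) (z - t i))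
    (hcover : ∀ w ∈ frontier F, ∃ i ∈ E, w ∈ segment ℝ (t i) (h i))
    (hinj : ∀ i ∈ E, ∀ j ∈ E, segment ℝ (t i) (h i) = segment ℝ (t j) (h j) → i = j) :
    ∑ i ∈ E, h i = ∑ i ∈ E, t i := by
  classical
  have tail_injOn : Set.InjOn t E := by
    intro i hi j hj hij
    have hhead : h i = h j := eq_of_mem_extremePoints_of_det2_nonneg hspan one_ne_zero
      (ht i hi).1 (hh i hi) (hh j hj) (hth i hi).symm (hij ▸ (hth j hj).symm)
      (by simpa using hleft i hi) (by simpa [hij] using hleft j hj)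
    exact hinj i hi j hj (by rw [hij, hhead])
  have hright : ∀ i ∈ E, ∀ z ∈ F, 0 ≤ -1 * det2 (t i - h i) (z - h i) := fun i hi z hz => by
    have key : det2 (h i - t i) (z - t i) = -1 * det2 (t i - h i) (z - h i) := by
      simp only [det2_apply, Pi.sub_apply]; ring
    exact key ▸ hleft i hi z hz
  have head_injOn : Set.InjOn h E := by
    intro i hi j hj hij
    have htail : t i = t j := eq_of_mem_extremePoints_of_det2_nonneg hspan (by norm_num)
      (hh i hi).1 (ht i hi) (ht j hj) (hth i hi) (hij ▸ hth j hj)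
      (hright i hi) (by simpa [hij] using hright j hj)
    exact hinj i hi j hj (by rw [hij, htail])
  refine Finset.sum_eq_sum_of_injOn_of_image_subset head_injOn tail_injOn ?_
  -- near the vertex `h i` the frontier leaves the edge `i`, so `h i` lies on another edge `j`,
  -- necessarily as its tail
  intro v hv
  obtain ⟨i, hi, rfl⟩ := Finset.mem_image.1 hv
  have hK : IsClosed (⋃ j ∈ E.erase i, segment ℝ (t j) (h j)) :=
    (E.erase i).finite_toSet.isClosed_biUnion fun j _ => by
      rw [← convexHull_pair]
      exact ((Set.toFinite _).isCompact_convexHull (𝕜 := ℝ)).isClosed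
  have hsub : frontier F \ segment ℝ (t i) (h i) ⊆ ⋃ j ∈ E.erase i, segment ℝ (t j) (h j) := by
    rintro w ⟨hw, hwi⟩
    obtain ⟨j, hj, hwj⟩ := hcover w hw
    exact Set.mem_biUnion (Finset.mem_erase.2 ⟨by rintro rfl; exact hwi hwj, hj⟩) hwj
  obtain ⟨j, hj, hij⟩ := Set.mem_iUnion₂.1 <| hK.closure_subset_iff.2 hsub <|
    mem_closure_frontier_diff_segment hconv hclosed hspan (hh i hi) (ht i hi).1 (hth i hi)
  obtain ⟨hji, hj⟩ := Finset.mem_erase.1 hj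
  rcases (mem_extremePoints_iff_forall_segment.1 (hh i hi)).2 _ (ht j hj).1 _ (hh j hj).1 hij
    with htj | hhj
  · exact Finset.mem_image.2 ⟨j, hj, htj⟩
  · exact absurd (head_injOn hj hi hhj) hji

theorem castPt_injective : Function.Injective castPt :=
  fun _ _ h => funext fun i => Int.cast_injective (congrFun h i)

theorem exists_eq_mul_of_isCoprime {c₀ c₁ v₀ v₁ : ℤ} (hc : IsCoprime c₀ c₁)
    (h : c₀ * v₀ + c₁ * v₁ = 0) : ∃ k : ℤ, v₀ = -(k * c₁) ∧ v₁ = k * c₀ := by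
  obtain ⟨x, y, hxy⟩ := hc
  exact ⟨x * v₁ - y * v₀, by linear_combination x * h - v₀ * hxy,
    by linear_combination y * h - v₁ * hxy⟩

/-- The lattice length of `[p, q]` times the primitive normal `c` is `q - p` turned by a quarter
turn, in one of the two directions. -/
theorem gcd_mul_affZ_eq_det2 {c : Fin 2 → ℤ} {d : ℤ} {p q : Fin 2 → ℤ}
    (hc : Int.gcd (c 0) (c 1) = 1) (hp : affZ c d (castPt p) = 0) (hq : affZ c d (castPt q) = 0) :
    (∀ x, (Int.gcd (q 0 - p 0) (q 1 - p 1) : ℝ) * affZ c d x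
      = det2 (castPt p - castPt q) (x - castPt q)) ∨
    (∀ x, (Int.gcd (q 0 - p 0) (q 1 - p 1) : ℝ) * affZ c d x
      = det2 (castPt q - castPt p) (x - castPt p)) := by
  have horth : c 0 * (q 0 - p 0) + c 1 * (q 1 - p 1) = 0 := by
    have : ((c 0 * (q 0 - p 0) + c 1 * (q 1 - p 1) : ℤ) : ℝ) = 0 := by
      simp only [affZ, castPt] at hp hq
      push_cast
      linear_combination hq - hp
    exact_mod_cast this
  obtain ⟨k, hk₀, hk₁⟩ := exists_eq_mul_of_isCoprime (Int.isCoprime_iff_gcd_eq_one.2 hc) horth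
  have hgcd : Int.gcd (q 0 - p 0) (q 1 - p 1) = k.natAbs := by
    rw [hk₀, hk₁, ← mul_neg, Int.gcd_mul_left, Int.neg_gcd, Int.gcd_comm, hc, mul_one]
  have hk₀' : (q 0 : ℝ) - p 0 = -(k * c 1) := by exact_mod_cast hk₀
  have hk₁' : (q 1 : ℝ) - p 1 = k * c 0 := by exact_mod_cast hk₁
  simp only [hgcd, Nat.cast_natAbs, Int.cast_abs, affZ, castPt, det2_apply, Pi.sub_apply]
  simp only [affZ, castPt] at hp hq
  rcases le_total 0 k with hk | hk
  · left
    intro x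
    rw [abs_of_nonneg (Int.cast_nonneg_iff.2 hk)]
    linear_combination (k : ℝ) * hq + (x 1 - q 1) * hk₀' - (x 0 - q 0) * hk₁'
  · right
    intro x
    rw [abs_of_nonpos (Int.cast_nonpos.2 hk)]
    linear_combination -(k : ℝ) * hp - (x 1 - p 1) * hk₀' + (x 0 - p 0) * hk₁'

theorem exists_orientation_of_supportFunction {F : Set (Fin 2 → ℝ)} {c : Fin 2 → ℤ} {d : ℤ}
    {p q : Fin 2 → ℤ} (hpq : p ≠ q)
    (hvert : castPt p ∈ F.extremePoints ℝ ∧ castPt q ∈ F.extremePoints ℝ)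
    (hc : Int.gcd (c 0) (c 1) = 1) (hzero : affZ c d (castPt p) = 0 ∧ affZ c d (castPt q) = 0)
    (hnonneg : ∀ x ∈ F, 0 ≤ affZ c d x) :
    ∃ t h : Fin 2 → ℝ, t ≠ h ∧ t ∈ F.extremePoints ℝ ∧ h ∈ F.extremePoints ℝ ∧
      segment ℝ t h = segment ℝ (castPt p) (castPt q) ∧
      (∀ z ∈ F, 0 ≤ det2 (h - t) (z - t)) ∧
      ∀ x, (Int.gcd (q 0 - p 0) (q 1 - p 1) : ℝ) * affZ c d x = det2 (h - t) (x - t) := by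
  have hcast : castPt p ≠ castPt q := castPt_injective.ne hpq
  have hleft {t h : Fin 2 → ℝ}
      (hdet : ∀ x, (Int.gcd (q 0 - p 0) (q 1 - p 1) : ℝ) * affZ c d x = det2 (h - t) (x - t)) :
      ∀ z ∈ F, 0 ≤ det2 (h - t) (z - t) := fun z hz =>
    hdet z ▸ mul_nonneg (Nat.cast_nonneg _) (hnonneg z hz)
  rcases gcd_mul_affZ_eq_det2 hc hzero.1 hzero.2 with hdet | hdet
  · exact ⟨castPt q, castPt p, hcast.symm, hvert.2, hvert.1, segment_symm ℝ _ _, hleft hdet, hdet⟩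
  · exact ⟨castPt p, castPt q, hcast, hvert.1, hvert.2, rfl, hleft hdet, hdet⟩

theorem stmt8_general (S : Finset (Fin 2 → ℤ)) (F : Set (Fin 2 → ℝ))
    (hF : F = convexHull ℝ (castPt '' (S : Set (Fin 2 → ℤ))))
    (hspan : affineSpan ℝ F = ⊤)
    (Edg : Finset ((Fin 2 → ℤ) × (Fin 2 → ℤ)))
    (hne : ∀ e ∈ Edg, e.1 ≠ e.2)
    (hvert : ∀ e ∈ Edg, castPt e.1 ∈ F.extremePoints ℝ ∧ castPt e.2 ∈ F.extremePoints ℝ)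
    (hcover : frontier F ⊆ ⋃ e ∈ Edg, segment ℝ (castPt e.1) (castPt e.2))
    (hinj : ∀ e ∈ Edg, ∀ e' ∈ Edg,
      segment ℝ (castPt e.1) (castPt e.2) = segment ℝ (castPt e'.1) (castPt e'.2) → e = e')
    (c : (Fin 2 → ℤ) × (Fin 2 → ℤ) → Fin 2 → ℤ)
    (d : (Fin 2 → ℤ) × (Fin 2 → ℤ) → ℤ)
    (hprim : ∀ e ∈ Edg, Int.gcd (c e 0) (c e 1) = 1)
    (hzero : ∀ e ∈ Edg, affZ (c e) (d e) (castPt e.1) = 0 ∧ affZ (c e) (d e) (castPt e.2) = 0)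
    (hnonneg : ∀ e ∈ Edg, ∀ x ∈ F, 0 ≤ affZ (c e) (d e) x) :
    ∀ x y : Fin 2 → ℝ,
      ∑ e ∈ Edg, (Int.gcd (e.2 0 - e.1 0) (e.2 1 - e.1 1) : ℝ) * affZ (c e) (d e) x =
      ∑ e ∈ Edg, (Int.gcd (e.2 0 - e.1 0) (e.2 1 - e.1 1) : ℝ) * affZ (c e) (d e) y := by
  intro x y
  choose! t h hth ht hh hseg hleft hdet using fun e (he : e ∈ Edg) =>
    exists_orientation_of_supportFunction (hne e he) (hvert e he) (hprim e he) (hzero e he)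
      (hnonneg e he)
  have hconv : Convex ℝ F := hF ▸ convex_convexHull ℝ _
  have hclosed : IsClosed F :=
    hF ▸ ((S.finite_toSet.image castPt).isCompact_convexHull (𝕜 := ℝ)).isClosed
  have hsum : ∑ e ∈ Edg, h e = ∑ e ∈ Edg, t e := by
    refine sum_head_eq_sum_tail hconv hclosed hspan hth ht hh hleft (fun w hw => ?_)
      fun e he e' he' hee' => hinj e he e' he' (by rw [← hseg e he, ← hseg e' he', hee'])
    obtain ⟨e, he, hwe⟩ := Set.mem_iUnion₂.1 (hcover hw)
    exact ⟨e, he, hseg e he ▸ hwe⟩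
  rw [← sub_eq_zero, ← Finset.sum_sub_distrib]
  calc _ = ∑ e ∈ Edg, det2 (h e - t e) (x - y) := Finset.sum_congr rfl fun e he => by
          rw [hdet e he x, hdet e he y, ← map_sub, sub_sub_sub_cancel_right]
    _ = det2 (∑ e ∈ Edg, h e - ∑ e ∈ Edg, t e) (x - y) := by
          rw [← Finset.sum_sub_distrib, map_sum, LinearMap.sum_apply]
    _ = 0 := by rw [hsum, sub_self, map_zero, LinearMap.zero_apply]

/-- Let `F` be an empty integral polygon with edge set `Edg` (each edge recorded by its two
endpoints, which are vertices of `F`; the edges cover the boundary and are recorded without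
repetition).  For each edge `S` let `ℓ_S` be its support function (a primitive integral
affine function vanishing on `S` and nonnegative on `F`) and `c_S` the lattice length of `S`.
Then `∑_{S ⊂ ∂F} c_S · ℓ_S` is a constant function on `ℝ²`. -/
theorem stmt8 (S : Finset (Fin 2 → ℤ)) (F : Set (Fin 2 → ℝ))
    (hF : F = convexHull ℝ (castPt '' (S : Set (Fin 2 → ℤ))))
    (hspan : affineSpan ℝ F = ⊤)
    (hempty : ∀ x ∈ interior F, ¬ IsLatticePt x)
    (Edg : Finset ((Fin 2 → ℤ) × (Fin 2 → ℤ)))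
    (hne : ∀ e ∈ Edg, e.1 ≠ e.2)
    (hvert : ∀ e ∈ Edg, castPt e.1 ∈ F.extremePoints ℝ ∧ castPt e.2 ∈ F.extremePoints ℝ)
    (hsub : ∀ e ∈ Edg, segment ℝ (castPt e.1) (castPt e.2) ⊆ frontier F)
    (hcover : frontier F ⊆ ⋃ e ∈ Edg, segment ℝ (castPt e.1) (castPt e.2))
    (hinj : ∀ e ∈ Edg, ∀ e' ∈ Edg,
      segment ℝ (castPt e.1) (castPt e.2) = segment ℝ (castPt e'.1) (castPt e'.2) → e = e')
    (c : (Fin 2 → ℤ) × (Fin 2 → ℤ) → Fin 2 → ℤ)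
    (d : (Fin 2 → ℤ) × (Fin 2 → ℤ) → ℤ)
    (hprim : ∀ e ∈ Edg, Int.gcd (c e 0) (c e 1) = 1)
    (hzero : ∀ e ∈ Edg, affZ (c e) (d e) (castPt e.1) = 0 ∧ affZ (c e) (d e) (castPt e.2) = 0)
    (hnonneg : ∀ e ∈ Edg, ∀ x ∈ F, 0 ≤ affZ (c e) (d e) x) :
    ∀ x y : Fin 2 → ℝ,
      ∑ e ∈ Edg, (Int.gcd (e.2 0 - e.1 0) (e.2 1 - e.1 1) : ℝ) * affZ (c e) (d e) x =
      ∑ e ∈ Edg, (Int.gcd (e.2 0 - e.1 0) (e.2 1 - e.1 1) : ℝ) * affZ (c e) (d e) y :=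
  stmt8_general S F hF hspan Edg hne hvert hcover hinj c d hprim hzero hnonneg
end

section
/- Let F = conv{(0,0),(t,0),(0,1)} ⊂ ℝ² be a t-triangle with edges S₁ (length t), S₂, S₃, and let r ∈ ℝ₊. Let ℓ_{rS_j} be the support functions of the dilated polygon rF, set all boundary conditions ε_S = 0, and let c_{rF} be the constant value of Σ_j c_{S_j} ℓ_{rS_j}. Then max{0, c_{rF} + 1} = |rF ∩ ℤ²| if r < 1, and max{0, c_{rF}+1} = |rF ∩ ℤ²| - |(r-1)F ∩ ℤ²| if r ≥ 1. -/
open Pointwise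
/-!
The support functions of the two legs take a value in `(-1, 0]` at the (integral) origin, so
their constant terms vanish. The support function of the hypotenuse is `⌊r t⌋ - x - t y`: it is
constant on the hypotenuse, primitive, and at least its value there at the origin. Hence
`c = ⌊r t⌋`. The lattice points of `s • F` are the `p ≥ 0` with `p 0 + t p 1 ≤ ⌊s t⌋`; removing
the bottom row of `⌊s t⌋ + 1` points leaves a translate of the lattice points of `(s - 1) • F`,
as `⌊(s - 1) t⌋ = ⌊s t⌋ - t`, and for `s < 1` nothing is left.
-/

lemma convexHull_triangle {t : ℝ} (ht : 0 < t) :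
    convexHull ℝ {![(0:ℝ), 0], ![t, 0], ![0, 1]} =
      {x : Fin 2 → ℝ | 0 ≤ x 0 ∧ 0 ≤ x 1 ∧ x 0 + t * x 1 ≤ t} := by
  apply le_antisymm
  · refine convexHull_min ?_ ?_
    · rintro x (rfl | rfl | rfl) <;> simp [ht.le]
    · rintro x ⟨hx0, hx1, hx2⟩ y ⟨hy0, hy1, hy2⟩ p q hp hq hpq
      simp only [Set.mem_ofPred_eq, Pi.add_apply, Pi.smul_apply, smul_eq_mul]
      refine ⟨by positivity, by positivity, by nlinarith⟩
  · rintro z ⟨hz0, hz1, hz2⟩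
    -- barycentric coordinates of `z` with respect to the three vertices
    have hw : ∀ i ∈ Finset.univ, 0 ≤ ![1 - z 0 / t - z 1, z 0 / t, z 1] i := by
      have : z 0 / t + z 1 ≤ 1 := by rw [div_add' _ _ _ ht.ne', div_le_one ht]; linarith
      intro i _; fin_cases i <;> simp <;> first | positivity | linarith
    convert (convex_convexHull ℝ _).sum_mem hw (by simp [Fin.sum_univ_three]; ring)
      (z := ![![(0:ℝ), 0], ![t, 0], ![0, 1]]) fun i _ => subset_convexHull ℝ _ ?_
    · ext i; fin_cases i <;> simp [Fin.sum_univ_three, ht.ne']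
    · fin_cases i <;> simp

lemma mem_smul_convexHull_triangle {t : ℝ} (ht : 0 < t) {s : ℝ} (hs : 0 ≤ s) {x : Fin 2 → ℝ} :
    x ∈ s • convexHull ℝ {![(0:ℝ), 0], ![t, 0], ![0, 1]} ↔
      0 ≤ x 0 ∧ 0 ≤ x 1 ∧ x 0 + t * x 1 ≤ s * t := by
  rcases hs.eq_or_lt with rfl | hs
  · rw [Set.zero_smul_set ⟨_, subset_convexHull ℝ _ (Set.mem_insert _ _)⟩, Set.mem_zero]
    constructor
    · rintro rfl; simp
    · rintro ⟨h0, h1, h2⟩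
      ext i; fin_cases i <;> simp <;> nlinarith
  · rw [Set.mem_smul_set, convexHull_triangle ht]
    constructor
    · rintro ⟨y, ⟨h0, h1, h2⟩, rfl⟩
      simp only [Pi.smul_apply, smul_eq_mul]
      exact ⟨by positivity, by positivity, by nlinarith [mul_le_mul_of_nonneg_left h2 hs.le]⟩
    · rintro ⟨h0, h1, h2⟩
      refine ⟨s⁻¹ • x, ?_, smul_inv_smul₀ hs.ne' x⟩
      have hss : s⁻¹ * s = 1 := inv_mul_cancel₀ hs.ne'
      simp only [Set.mem_ofPred_eq, Pi.smul_apply, smul_eq_mul]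
      refine ⟨by positivity, by positivity, ?_⟩
      nlinarith [mul_le_mul_of_nonneg_left h2 (inv_nonneg.2 hs.le)]

def latticeTriangle (t : ℕ) (k : ℤ) : Set (Fin 2 → ℤ) :=
  {p | 0 ≤ p 0 ∧ 0 ≤ p 1 ∧ p 0 + t * p 1 ≤ k}

lemma latticeTriangle_eq_empty {t : ℕ} {k : ℤ} (hk : k < 0) : latticeTriangle t k = ∅ := by
  refine Set.eq_empty_of_forall_notMem fun p ⟨h0, h1, h2⟩ => ?_
  have : 0 ≤ (t : ℤ) * p 1 := by positivity
  omega

lemma latticeTriangle_finite {t : ℕ} (ht : 0 < t) (k : ℤ) : (latticeTriangle t k).Finite := by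
  refine (Set.finite_Icc (0 : Fin 2 → ℤ) fun _ => k).subset fun p ⟨h0, h1, h2⟩ => ?_
  have : p 1 ≤ t * p 1 := le_mul_of_one_le_left h1 (by exact_mod_cast ht)
  constructor <;> intro i <;> fin_cases i <;> simp <;> omega

lemma latticeTriangle_eq_union (t : ℕ) (k : ℤ) :
    latticeTriangle t k =
      (fun x : ℤ => ![x, 0]) '' Set.Icc 0 k ∪ (· + ![0, 1]) '' latticeTriangle t (k - t) := by
  ext p
  simp only [latticeTriangle, Set.mem_union, Set.mem_image, Set.mem_ofPred_eq, Set.mem_Icc]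
  constructor
  · rintro ⟨h0, h1, h2⟩
    rcases h1.eq_or_lt with h1 | h1
    · refine Or.inl ⟨p 0, ⟨h0, by simpa [← h1] using h2⟩, ?_⟩
      ext i; fin_cases i <;> simp [h1]
    · refine Or.inr ⟨p - ![0, 1], ⟨by simpa using h0, by simp; omega, ?_⟩, sub_add_cancel _ _⟩
      simp only [Pi.sub_apply, Matrix.cons_val_zero, Matrix.cons_val_one, Matrix.cons_val_fin_one,
        sub_zero]
      nlinarith
  · rintro (⟨x, ⟨hx0, hxk⟩, rfl⟩ | ⟨q, ⟨h0, h1, h2⟩, rfl⟩)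
    · simpa using ⟨hx0, hxk⟩
    · simp only [Pi.add_apply, Matrix.cons_val_zero, Matrix.cons_val_one, Matrix.cons_val_fin_one,
        add_zero]
      exact ⟨h0, by omega, by nlinarith⟩

lemma ncard_latticeTriangle {t : ℕ} (ht : 0 < t) (k : ℤ) :
    (latticeTriangle t k).ncard = (latticeTriangle t (k - t)).ncard + (k + 1).toNat := by
  have hdisj : Disjoint ((fun x : ℤ => ![x, 0]) '' Set.Icc 0 k)
      ((· + ![0, 1]) '' latticeTriangle t (k - t)) := by
    rw [Set.disjoint_iff]
    rintro _ ⟨⟨x, -, rfl⟩, ⟨q, ⟨-, hq, -⟩, hxq⟩⟩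
    have := congrFun hxq 1
    simp only [Pi.add_apply, Matrix.cons_val_one, Matrix.cons_val_fin_one] at this
    omega
  rw [latticeTriangle_eq_union, Set.ncard_union_eq hdisj ((Set.finite_Icc 0 k).image _)
      ((latticeTriangle_finite ht _).image _),
    Set.ncard_image_of_injective _ (fun x y h => by simpa using congrFun h 0),
    Set.ncard_image_of_injective _ (add_left_injective _),
    ← Finset.coe_Icc, Set.ncard_coe_finset, Int.card_Icc, sub_zero, add_comm]

lemma natCard_lattice_mem_smul_convexHull_triangle {t : ℕ} (ht : 0 < t) {s : ℝ} (hs : 0 ≤ s) :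
    Nat.card {p : Fin 2 → ℤ // castPt p ∈ s • convexHull ℝ {![(0:ℝ), 0], ![(t:ℝ), 0], ![0, 1]}} =
      (latticeTriangle t ⌊s * t⌋).ncard := by
  have hset : {p : Fin 2 → ℤ | castPt p ∈ s • convexHull ℝ {![(0:ℝ), 0], ![(t:ℝ), 0], ![0, 1]}} =
      latticeTriangle t ⌊s * t⌋ := by
    ext p
    simp only [Set.mem_ofPred_eq, mem_smul_convexHull_triangle (Nat.cast_pos.2 ht) hs,
      latticeTriangle, Int.le_floor, castPt, Int.cast_nonneg_iff]
    push_cast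
    rfl
  rw [← hset]
  exact Nat.card_coe_set_eq _

lemma eq_floor_of_neg_one_lt_sub {d : ℤ} {x : ℝ} (h₁ : -1 < d - x) (h₂ : d - x ≤ 0) :
    d = ⌊x⌋ :=
  (Int.floor_eq_iff.2 ⟨by linarith, by linarith⟩).symm

lemma affZ_zero (a : Fin 2 → ℤ) (d : ℤ) : affZ a d 0 = d := by
  simp [affZ]

lemma eq_zero_of_affZ_eq_on_zero_mem {S : Set (Fin 2 → ℝ)} (hS : 0 ∈ S) {a : Fin 2 → ℤ} {d : ℤ}
    {m : ℝ} (hm : -1 < m ∧ m ≤ 0) (hval : ∀ x ∈ S, affZ a d x = m) : d = 0 := by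
  have hd : (d : ℝ) = m := affZ_zero a d ▸ hval 0 hS
  simpa using
    eq_floor_of_neg_one_lt_sub (x := 0) (by simpa [hd] using hm.1) (by simpa [hd] using hm.2)

lemma eq_floor_of_affZ_eq_on_hypotenuse {t : ℕ} (ht : 0 < t) {r : ℝ} (hr : 0 < r)
    {a : Fin 2 → ℤ} {d : ℤ} {m : ℝ} (hprim : Int.gcd (a 0) (a 1) = 1) (hm : -1 < m ∧ m ≤ 0)
    (hA : affZ a d (r • ![(t:ℝ), 0]) = m) (hB : affZ a d (r • ![0, 1]) = m)
    (hO : m ≤ affZ a d 0) : d = ⌊r * t⌋ := by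
  simp only [affZ, Pi.smul_apply, smul_eq_mul, Matrix.cons_val_zero, Matrix.cons_val_one,
    Matrix.cons_val_fin_one, mul_zero, mul_one, add_zero, Pi.zero_apply, zero_add] at hA hB hO
  have ht' : (0 : ℝ) < t := Nat.cast_pos.2 ht
  have ha1 : a 1 = a 0 * t := by
    have : ((a 0 * t : ℤ) : ℝ) * r = (a 1 : ℝ) * r := by push_cast; linarith
    exact_mod_cast (mul_right_cancel₀ hr.ne' this).symm
  have ha0 : a 0 = -1 := by
    rw [ha1, Int.gcd_mul_right_right] at hprim
    have hneg : (a 0 : ℝ) * (r * t) ≤ 0 := by linarith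
    rcases Int.natAbs_eq_iff.1 hprim with h | h
    · rw [h] at hneg; push_cast at hneg; nlinarith
    · exact h
  rw [ha0] at hA
  push_cast at hA
  exact eq_floor_of_neg_one_lt_sub (by linarith) (by linarith)

/-- Counting lattice points in a dilated `t`-triangle.  Let
`F = conv{(0,0),(t,0),(0,1)}` with edges `S₁ = [(0,0),(t,0)]` (lattice length `t`),
`S₂ = [(t,0),(0,1)]`, `S₃ = [(0,0),(0,1)]` (lattice length `1`), and let `r > 0`.
For each `j`, `ℓ_{rS_j} = affZ (a j) (d j)` is the support function of the edge `r·S_j` of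
the dilated triangle `r·F`: a primitive integral affine function whose (constant) value
`m j` on `r·S_j` lies in `(-1,0]` and which is `≥ m j` on `r·F`.  With all boundary
conditions `ε_S = 0`, the content `c` is the constant value of `t·ℓ_{rS₁} + ℓ_{rS₂} + ℓ_{rS₃}`
(an integer).  Then `max{0, c+1} = |rF ∩ ℤ²|` if `r < 1`, and
`max{0, c+1} = |rF ∩ ℤ²| - |(r-1)F ∩ ℤ²|` if `r ≥ 1`. -/
theorem stmt9 (t : ℕ) (ht : 1 ≤ t) (r : ℝ) (hr : 0 < r)
    (F : Set (Fin 2 → ℝ))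
    (hFdef : F = convexHull ℝ {![(0:ℝ),0], ![(t:ℝ),0], ![0,1]})
    (Sedge : Fin 3 → Set (Fin 2 → ℝ))
    (hS0 : Sedge 0 = segment ℝ ![(0:ℝ),0] ![(t:ℝ),0])
    (hS1 : Sedge 1 = segment ℝ ![(t:ℝ),0] ![(0:ℝ),1])
    (hS2 : Sedge 2 = segment ℝ ![(0:ℝ),0] ![(0:ℝ),1])
    (a : Fin 3 → Fin 2 → ℤ) (d : Fin 3 → ℤ) (m : Fin 3 → ℝ)
    (hprim : ∀ j, Int.gcd (a j 0) (a j 1) = 1)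
    (hm : ∀ j, -1 < m j ∧ m j ≤ 0)
    (hval : ∀ j, ∀ x ∈ r • Sedge j, affZ (a j) (d j) x = m j)
    (hmin : ∀ j, ∀ x ∈ r • F, m j ≤ affZ (a j) (d j) x)
    (c : ℤ)
    (hc : ∀ x : Fin 2 → ℝ,
      (t : ℝ) * affZ (a 0) (d 0) x + affZ (a 1) (d 1) x + affZ (a 2) (d 2) x = (c : ℝ)) :
    (r < 1 →
      (max 0 (c + 1) : ℤ) = (Nat.card {p : Fin 2 → ℤ // castPt p ∈ r • F} : ℤ)) ∧
    (1 ≤ r →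
      (max 0 (c + 1) : ℤ) = (Nat.card {p : Fin 2 → ℤ // castPt p ∈ r • F} : ℤ) -
        (Nat.card {p : Fin 2 → ℤ // castPt p ∈ (r - 1) • F} : ℤ)) := by
  subst hFdef
  have ht' : 0 < t := ht
  have hzero : ![(0:ℝ), 0] = 0 := by ext i; fin_cases i <;> rfl
  have horigin : ∀ w : Fin 2 → ℝ, (0 : Fin 2 → ℝ) ∈ r • segment ℝ ![(0:ℝ), 0] w := fun w =>
    Set.zero_mem_smul_set (hzero ▸ left_mem_segment ℝ _ w)
  have hd0 : d 0 = 0 := eq_zero_of_affZ_eq_on_zero_mem (hS0 ▸ horigin _) (hm 0) (hval 0)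
  have hd2 : d 2 = 0 := eq_zero_of_affZ_eq_on_zero_mem (hS2 ▸ horigin _) (hm 2) (hval 2)
  have hd1 : d 1 = ⌊r * t⌋ :=
    eq_floor_of_affZ_eq_on_hypotenuse ht' hr (hprim 1) (hm 1)
      (hval 1 _ (hS1 ▸ Set.smul_mem_smul_set (left_mem_segment ℝ _ _)))
      (hval 1 _ (hS1 ▸ Set.smul_mem_smul_set (right_mem_segment ℝ _ _)))
      (hmin 1 0 (Set.zero_mem_smul_set (hzero ▸ subset_convexHull ℝ _ (Set.mem_insert _ _))))
  have hcfloor : c = ⌊r * t⌋ := by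
    have := hc 0
    simp only [affZ_zero, hd0, hd2, hd1] at this
    exact_mod_cast (by simpa using this : ((⌊r * t⌋ : ℤ) : ℝ) = c).symm
  rw [hcfloor, max_comm, ← Int.toNat_eq_max,
    natCard_lattice_mem_smul_convexHull_triangle ht' hr.le, ncard_latticeTriangle ht']
  refine ⟨fun hr1 => ?_, fun hr1 => ?_⟩
  · have hrt : r * t < t := mul_lt_of_lt_one_left (Nat.cast_pos.2 ht') hr1
    rw [latticeTriangle_eq_empty (by rw [sub_neg, Int.floor_lt]; exact_mod_cast hrt)]
    simp
  · rw [natCard_lattice_mem_smul_convexHull_triangle ht' (sub_nonneg.2 hr1), sub_mul, one_mul,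
      Int.floor_sub_natCast]
    push_cast
    ring
end

section
/- Let [p₁, p₂] = F_n ∩ F_{n'} be an edge between two faces of a Newton diagram, q₁, q₂ ∈ ∂F_n ∩ ℤ³ such that [p₁,q₁], [p₂,q₂] are the primitive boundary segments of F_n adjacent to [p₁,p₂], and set α₁ = ℓ_{n'}(q₁ - p₁), α₂ = ℓ_{n'}(q₂ - p₂). If p₁ is a regular vertex of F_n, then α_{n,n'} = α₁ and α₁ divides α₂, where α_{n,n'} is the determinant of the pair of support functions ℓ_n, ℓ_{n'}. -/
/-! On a regular vertex every lattice point of `H` is `p₁ + a (p₂ - p₁) + b (q₁ - p₁)`, and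
`ℓ_{n'}` vanishes on the edge direction `p₂ - p₁`, so `ℓ_{n'}(x) - ℓ_{n'}(p₁) = b α₁`.
Hence `α₁` divides every difference of `ℓ_{n'}` on `H`, it is attained at `x = q₁`, and
`α₂ = ℓ_{n'}(q₂) - ℓ_{n'}(p₁)` is one of these differences. -/

theorem LinearMap.dvd_sub_of_eq_add_smul_add_smul {R M : Type*} [CommRing R] [AddCommGroup M]
    [Module R M] (g : M →ₗ[R] R) {p u v x : M} {a b : R} (hu : g u = 0)
    (hx : x = p + a • u + b • v) : g v ∣ g x - g p :=
  ⟨b, by simp only [hx, map_add, map_smul, hu, smul_eq_mul]; ring⟩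

theorem stmt12_general (ℓn ℓn' : (Fin 3 → ℤ) →ₗ[ℤ] ℤ) (m : ℤ)
    (p₁ p₂ q₁ q₂ : Fin 3 → ℤ)
    (hq₁ : ℓn q₁ = m) (hq₂ : ℓn q₂ = m)
    (hedge : ℓn' p₁ = ℓn' p₂)
    (hreg : ∀ x : Fin 3 → ℤ, ℓn x = m →
      ∃ a b : ℤ, x = p₁ + a • (p₂ - p₁) + b • (q₁ - p₁))
    (α₁ α₂ : ℤ)
    (hα₁ : α₁ = ℓn' (q₁ - p₁)) (hα₂ : α₂ = ℓn' (q₂ - p₂)) :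
    (∀ x : Fin 3 → ℤ, ℓn x = m → α₁ ∣ (ℓn' x - ℓn' p₁)) ∧
    (∀ c : ℤ, (∀ x : Fin 3 → ℤ, ℓn x = m → c ∣ (ℓn' x - ℓn' p₁)) → c ∣ α₁) ∧
    α₁ ∣ α₂ := by
  have hα₁' : α₁ = ℓn' q₁ - ℓn' p₁ := by rw [hα₁, map_sub]
  have hα₂' : α₂ = ℓn' q₂ - ℓn' p₁ := by rw [hα₂, map_sub, hedge]
  have hdvd : ∀ x : Fin 3 → ℤ, ℓn x = m → α₁ ∣ (ℓn' x - ℓn' p₁) := by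
    intro x hx
    obtain ⟨a, b, rfl⟩ := hreg x hx
    rw [hα₁]
    exact ℓn'.dvd_sub_of_eq_add_smul_add_smul (by rw [map_sub, hedge, sub_self]) rfl
  refine ⟨hdvd, fun c hc => hα₁' ▸ hc q₁ hq₁, hα₂' ▸ hdvd q₂ hq₂⟩

/-- Let `[p₁,p₂] = F_n ∩ F_{n'}` be an edge between two faces of a Newton diagram, lying in
the affine plane `H = {ℓ_n = m}`, and let `q₁, q₂ ∈ ∂F_n ∩ ℤ³` be such that `[p₁,q₁]` and
`[p₂,q₂]` are the primitive boundary segments of `F_n` adjacent to `[p₁,p₂]`.  Set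
`α₁ = ℓ_{n'}(q₁-p₁)` and `α₂ = ℓ_{n'}(q₂-p₂)`.  If `p₁` is a regular vertex of `F_n` — i.e.
`p₂-p₁` and `q₁-p₁` form an affine `ℤ`-basis of `H ∩ ℤ³` — then `α₁` equals the content
`α_{n,n'}` of the affine function `ℓ_{n'}|_H` (the gcd of its differences on `H ∩ ℤ³`) and
`α₁` divides `α₂`. -/
theorem stmt12 (ℓn ℓn' : (Fin 3 → ℤ) →ₗ[ℤ] ℤ) (m : ℤ)
    (p₁ p₂ q₁ q₂ : Fin 3 → ℤ)
    (hp₁ : ℓn p₁ = m) (hp₂ : ℓn p₂ = m) (hq₁ : ℓn q₁ = m) (hq₂ : ℓn q₂ = m)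
    (hedge : ℓn' p₁ = ℓn' p₂)
    (hreg : ∀ x : Fin 3 → ℤ, ℓn x = m →
      ∃ a b : ℤ, x = p₁ + a • (p₂ - p₁) + b • (q₁ - p₁))
    (α₁ α₂ : ℤ)
    (hα₁ : α₁ = ℓn' (q₁ - p₁)) (hα₂ : α₂ = ℓn' (q₂ - p₂))
    (hα₁pos : 0 < α₁) :
    (∀ x : Fin 3 → ℤ, ℓn x = m → α₁ ∣ (ℓn' x - ℓn' p₁)) ∧
    (∀ c : ℤ, (∀ x : Fin 3 → ℤ, ℓn x = m → c ∣ (ℓn' x - ℓn' p₁)) → c ∣ α₁) ∧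
    α₁ ∣ α₂ :=
  stmt12_general ℓn ℓn' m p₁ p₂ q₁ q₂ hq₁ hq₂ hedge hreg α₁ α₂ hα₁ hα₂
end

section
/- Let L = ℤ^𝒱 be the lattice of a connected negative definite graph G and 𝒩 ⊂ 𝒱 any subset. For each Z ∈ L there exists a unique cycle x(Z) ∈ L such that: (i) m_n(x(Z)) = m_n(Z) for all n ∈ 𝒩; (ii) (x(Z), E_v) ≤ 0 for all v ∈ 𝒱 \ 𝒩; (iii) x(Z) is minimal among cycles satisfying (i) and (ii). -/
/-!
Conditions (i) and (ii) are preserved by coordinatewise minima, since the off-diagonal entries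
of the intersection form are nonnegative: lowering coordinates other than `v` can only raise
`(x, E_v)`. So it suffices that the admissible cycles form a nonempty set bounded below in `ℤ^𝒱`.
For nonemptiness, the block of the form on `𝒱 \ 𝒩` is negative definite, hence nonsingular,
and its adjugate gives a cycle `d` supported off `𝒩` with `(d, E_v) < 0` for all `v ∉ 𝒩`; add a
large multiple of `d` to `Z`. For the lower bound, fix an admissible `s`; for admissible `x` the
cycle `u = s - min(x, s) ≥ 0` is supported off `𝒩`, where `(u, E_v) ≥ (s, E_v) ≥ -K`, so
`(u, u) ≥ -K ∑ u`, and negative definiteness bounds `∑ u` from above.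
-/

open Matrix Finset

theorem InfClosed.exists_isLeast {α : Type*} [SemilatticeInf α] [LocallyFiniteOrder α]
    {s : Set α} (hs : InfClosed s) (hne : s.Nonempty) (hbdd : BddBelow s) :
    ∃ a, IsLeast s a := by
  obtain ⟨b, hb⟩ := hbdd
  obtain ⟨c, hc⟩ := hne
  have hfin : (s ∩ Set.Icc b c).Finite := (Set.finite_Icc b c).subset Set.inter_subset_right
  have hc' : c ∈ hfin.toFinset := by simp [hc, hb hc]
  refine ⟨hfin.toFinset.inf' ⟨c, hc'⟩ id,
    hs.finsetInf'_mem _ fun x hx => (hfin.mem_toFinset.1 hx).1, fun y hy => ?_⟩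
  have hyc : y ⊓ c ∈ hfin.toFinset := by simp [hs hy hc, hb hy, hb hc]
  exact (inf'_le _ hyc).trans inf_le_left

section LauferCycles

variable {ι R : Type*} [Fintype ι] [Ring R] [LinearOrder R] [IsOrderedRing R]
  {I : Matrix ι ι R}

theorem Matrix.mulVec_apply_le_of_le_of_eq (hoff : ∀ i j, i ≠ j → 0 ≤ I i j) {x y : ι → R}
    (hxy : x ≤ y) {i : ι} (hi : x i = y i) : (I *ᵥ x) i ≤ (I *ᵥ y) i := by
  refine sum_le_sum fun j _ => ?_
  rcases eq_or_ne i j with rfl | hij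
  · rw [hi]
  · exact mul_le_mul_of_nonneg_left (hxy j) (hoff i j hij)

/-- The cycles satisfying conditions (i) and (ii) of the Laufer operator. -/
def lauferCycles (I : Matrix ι ι R) (N : Set ι) (Z : ι → R) : Set (ι → R) :=
  {x | (∀ n ∈ N, x n = Z n) ∧ ∀ v ∉ N, (I *ᵥ x) v ≤ 0}

theorem infClosed_lauferCycles (hoff : ∀ i j, i ≠ j → 0 ≤ I i j) (N : Set ι) (Z : ι → R) :
    InfClosed (lauferCycles I N Z) := by
  rintro x ⟨hxN, hxI⟩ y ⟨hyN, hyI⟩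
  refine ⟨fun n hn => by simp [hxN n hn, hyN n hn], fun v hv => ?_⟩
  rcases le_total (x v) (y v) with h | h
  · exact (mulVec_apply_le_of_le_of_eq hoff inf_le_left (inf_eq_left.2 h)).trans (hxI v hv)
  · exact (mulVec_apply_le_of_le_of_eq hoff inf_le_right (inf_eq_right.2 h)).trans (hyI v hv)

end LauferCycles

section Submatrix

variable {ι R : Type*} [Fintype ι] [CommRing R] {p : ι → Prop} [DecidablePred p]

theorem sum_mul_extend_subtype_val (g : ι → R) (x : Subtype p → R) :
    ∑ i, g i * Function.extend Subtype.val x 0 i = ∑ j : Subtype p, g j * x j := by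
  rw [← Fintype.sum_subtype_add_sum_subtype p, add_eq_left.2]
  · exact sum_congr rfl fun j _ => by rw [Subtype.val_injective.extend_apply]
  · refine sum_eq_zero fun j _ => ?_
    rw [Function.extend_apply' _ _ _ fun ⟨k, hk⟩ => j.2 (hk ▸ k.2), Pi.zero_apply, mul_zero]

theorem Matrix.mulVec_extend_subtype_val (A : Matrix ι ι R) (x : Subtype p → R) (j : Subtype p) :
    (A *ᵥ Function.extend Subtype.val x 0) j = (A.submatrix Subtype.val Subtype.val *ᵥ x) j :=
  sum_mul_extend_subtype_val _ x

theorem Matrix.extend_dotProduct_mulVec_extend (A : Matrix ι ι R) (x : Subtype p → R) :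
    Function.extend Subtype.val x 0 ⬝ᵥ A *ᵥ Function.extend Subtype.val x 0 =
      x ⬝ᵥ A.submatrix Subtype.val Subtype.val *ᵥ x := by
  rw [dotProduct_comm, dotProduct, sum_mul_extend_subtype_val, dotProduct_comm]
  exact sum_congr rfl fun j _ => by rw [mulVec_extend_subtype_val]

end Submatrix

section QuadraticForm

variable {ι R : Type*} [Fintype ι] [CommRing R]

/-- Unlike `Matrix.PosDef`, this does not ask for symmetry. -/
def Matrix.NegDefinite [Preorder R] (A : Matrix ι ι R) : Prop :=
  ∀ x ≠ 0, x ⬝ᵥ A *ᵥ x < 0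

theorem Matrix.add_smul_dotProduct_mulVec_add_smul (A : Matrix ι ι R) (u w : ι → R) (t : R) :
    (u + t • w) ⬝ᵥ A *ᵥ (u + t • w) =
      u ⬝ᵥ A *ᵥ u + t * (u ⬝ᵥ (A + Aᵀ) *ᵥ w) + t ^ 2 * (w ⬝ᵥ A *ᵥ w) := by
  have hswap : w ⬝ᵥ A *ᵥ u = u ⬝ᵥ Aᵀ *ᵥ w := by
    rw [mulVec_transpose, dotProduct_mulVec, dotProduct_comm]
  simp only [mulVec_add, mulVec_smul, add_dotProduct, dotProduct_add, smul_dotProduct,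
    dotProduct_smul, add_mulVec, hswap, smul_eq_mul]
  ring

theorem Matrix.neg_mul_sum_le_dotProduct_mulVec [LinearOrder R] [IsStrictOrderedRing R]
    {A : Matrix ι ι R} {u : ι → R} {K : R} (hu : 0 ≤ u) (hK : ∀ i, u i ≠ 0 → -K ≤ (A *ᵥ u) i) :
    -(K * ∑ i, u i) ≤ u ⬝ᵥ A *ᵥ u := by
  rw [mul_sum, ← sum_neg_distrib]
  refine sum_le_sum fun i _ => ?_
  by_cases hi : u i = 0
  · simp [hi]
  · linarith [mul_le_mul_of_nonneg_left (hK i hi) (hu i)]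

theorem Matrix.intCast_dotProduct_mulVec {K : Type*} [CommRing K] (I : Matrix ι ι ℤ)
    (x : ι → ℤ) :
    ((x ⬝ᵥ I *ᵥ x : ℤ) : K) = (fun i => (x i : K)) ⬝ᵥ I.map (↑) *ᵥ fun i => (x i : K) := by
  simp [dotProduct, mulVec]

theorem Matrix.exists_mulVec_neg_of_det_ne_zero [DecidableEq ι] [LinearOrder R]
    [IsStrictOrderedRing R] {A : Matrix ι ι R} (hA : A.det ≠ 0) : ∃ d, ∀ i, (A *ᵥ d) i < 0 := by
  refine ⟨-(A.adjugate *ᵥ fun _ => A.det), fun i => ?_⟩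
  rw [mulVec_neg, mulVec_mulVec, mul_adjugate, smul_mulVec, one_mulVec]
  simpa using mul_self_pos.2 hA

namespace Matrix.NegDefinite

variable [LinearOrder R] {A : Matrix ι ι R}

theorem dotProduct_mulVec_nonpos (hA : A.NegDefinite) (x : ι → R) : x ⬝ᵥ A *ᵥ x ≤ 0 := by
  rcases eq_or_ne x 0 with rfl | hx
  · simp
  · exact (hA x hx).le

theorem det_ne_zero [DecidableEq ι] [IsStrictOrderedRing R] (hA : A.NegDefinite) :
    A.det ≠ 0 := fun h =>
  let ⟨x, hx, hAx⟩ := exists_mulVec_eq_zero_iff.2 h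
  (hA x hx).ne (by rw [hAx, dotProduct_zero])

theorem add_transpose [IsStrictOrderedRing R] (hA : A.NegDefinite) :
    (A + Aᵀ).NegDefinite := fun x hx => by
  rw [add_mulVec, dotProduct_add, mulVec_transpose, dotProduct_comm x (x ᵥ* A),
    ← dotProduct_mulVec]
  linarith [hA x hx]

theorem submatrix_subtype_val {p : ι → Prop} [DecidablePred p] (hA : A.NegDefinite) :
    (A.submatrix Subtype.val Subtype.val : Matrix (Subtype p) (Subtype p) R).NegDefinite := by
  intro x hx
  rw [← extend_dotProduct_mulVec_extend]
  refine hA _ fun h => hx (funext fun j => ?_)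
  rw [← Subtype.val_injective.extend_apply x 0 j, h, Pi.zero_apply, Pi.zero_apply]

end Matrix.NegDefinite

section Field

variable {𝕜 : Type*} [Field 𝕜] [LinearOrder 𝕜] [IsStrictOrderedRing 𝕜] {A : Matrix ι ι 𝕜}

theorem Matrix.NegDefinite.exists_sum_le_of_neg_mul_sum_le (hA : A.NegDefinite) (C : 𝕜) :
    ∃ B, ∀ u : ι → 𝕜, -(C * ∑ i, u i) ≤ u ⬝ᵥ A *ᵥ u → ∑ i, u i ≤ B := by
  classical
  obtain ⟨w, hw⟩ := mulVec_surjective_iff_isUnit.2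
    ((isUnit_iff_isUnit_det _).2 (isUnit_iff_ne_zero.2 hA.add_transpose.det_ne_zero)) 1
  refine ⟨-((C + 1) ^ 2 * (w ⬝ᵥ A *ᵥ w)), fun u hu => ?_⟩
  -- `w` makes the cross term of `u + t • w` equal to `t * ∑ i, u i`; then take `t = C + 1`
  have h := hA.dotProduct_mulVec_nonpos (u + (C + 1) • w)
  rw [add_smul_dotProduct_mulVec_add_smul, hw, dotProduct_one] at h
  linarith

end Field

theorem Matrix.NegDefinite.of_map_intCast {K : Type*} [CommRing K] [LinearOrder K]
    [IsStrictOrderedRing K] {I : Matrix ι ι ℤ} (hI : (I.map ((↑) : ℤ → K)).NegDefinite) :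
    I.NegDefinite := fun x hx => by
  have h := hI (fun i => (x i : K)) fun h => hx (funext fun i => by simpa using congrFun h i)
  rw [← intCast_dotProduct_mulVec] at h
  exact_mod_cast h

end QuadraticForm

section Integer

variable {ι : Type*} [Fintype ι] {I : Matrix ι ι ℤ}

theorem lauferCycles_nonempty (hI : I.NegDefinite) (N : Set ι) (Z : ι → ℤ) :
    (lauferCycles I N Z).Nonempty := by
  classical
  obtain ⟨d, hd⟩ := exists_mulVec_neg_of_det_ne_zero
    (hI.submatrix_subtype_val (p := (· ∉ N))).det_ne_zero
  obtain ⟨k, hk⟩ := Finite.exists_le (I *ᵥ Z)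
  set e := Function.extend (Subtype.val : {v // v ∉ N} → ι) d 0
  refine ⟨Z + max k 0 • e, fun n hn => ?_, fun v hv => ?_⟩
  · have hen : e n = 0 := Function.extend_apply' _ _ _ (by rintro ⟨a, rfl⟩; exact a.2 hn)
    simp [hen]
  · have hev := mulVec_extend_subtype_val I d ⟨v, hv⟩ ▸ hd ⟨v, hv⟩
    rw [mulVec_add, mulVec_smul, Pi.add_apply, Pi.smul_apply, smul_eq_mul]
    nlinarith [hk v, le_max_left k 0, le_max_right k 0]

theorem bddBelow_lauferCycles (hoff : ∀ i j, i ≠ j → 0 ≤ I i j)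
    (hI : (I.map ((↑) : ℤ → ℚ)).NegDefinite) (N : Set ι) (Z : ι → ℤ) :
    BddBelow (lauferCycles I N Z) := by
  rcases (lauferCycles I N Z).eq_empty_or_nonempty with h | ⟨s, hs⟩
  · exact h ▸ bddBelow_empty
  obtain ⟨K, hK⟩ := Finite.exists_le fun i => -(I *ᵥ s) i
  obtain ⟨B, hB⟩ := hI.exists_sum_le_of_neg_mul_sum_le (K : ℚ)
  refine ⟨fun i => s i - ⌈B⌉, fun x hx i => ?_⟩
  set u := s - x ⊓ s
  have hu : 0 ≤ u := fun j => sub_nonneg.2 inf_le_right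
  have hIu : ∀ j, u j ≠ 0 → -K ≤ (I *ᵥ u) j := fun j hj => by
    have hjN : j ∉ N := fun hjN => hj (by simp [u, hx.1 j hjN, hs.1 j hjN])
    have := (infClosed_lauferCycles hoff N Z hx hs).2 j hjN
    rw [mulVec_sub, Pi.sub_apply]
    linarith [hK j]
  have hquad : -((K : ℚ) * ∑ j, (u j : ℚ)) ≤
      (fun j => (u j : ℚ)) ⬝ᵥ I.map (↑) *ᵥ fun j => (u j : ℚ) := by
    rw [← intCast_dotProduct_mulVec]
    exact_mod_cast neg_mul_sum_le_dotProduct_mulVec hu hIu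
  have hui : (u i : ℚ) ≤ ⌈B⌉ :=
    (single_le_sum (fun j _ => by exact_mod_cast hu j) (mem_univ i)).trans
      ((hB _ hquad).trans (Int.le_ceil B))
  have hui' : u i ≤ ⌈B⌉ := by exact_mod_cast hui
  calc s i - ⌈B⌉ ≤ s i - u i := by linarith
    _ = (x ⊓ s) i := by simp [u]
    _ ≤ x i := inf_le_left

end Integer

theorem stmt13_general {V : Type*} [Fintype V]
    (I : Matrix V V ℤ)
    (hoff : ∀ v w : V, v ≠ w → 0 ≤ I v w)
    (hnegdef : ∀ x : V → ℚ, x ≠ 0 → ∑ v, ∑ w, x v * (I v w : ℚ) * x w < 0)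
    (N : Set V) (Z : V → ℤ) :
    ∃! x : V → ℤ,
      ((∀ n ∈ N, x n = Z n) ∧ (∀ v ∉ N, ∑ w, I v w * x w ≤ 0)) ∧
      ∀ y : V → ℤ, (∀ n ∈ N, y n = Z n) → (∀ v ∉ N, ∑ w, I v w * y w ≤ 0) → x ≤ y := by
  classical
  have hI : (I.map ((↑) : ℤ → ℚ)).NegDefinite := fun x hx => by
    simpa [dotProduct, mulVec, mul_sum, mul_assoc] using hnegdef x hx
  obtain ⟨x, hx⟩ := (infClosed_lauferCycles hoff N Z).exists_isLeast
    (lauferCycles_nonempty hI.of_map_intCast N Z) (bddBelow_lauferCycles hoff hI N Z)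
  refine ⟨x, ⟨hx.1, fun y hy₁ hy₂ => hx.2 ⟨hy₁, hy₂⟩⟩, fun y hy => ?_⟩
  exact IsLeast.unique ⟨hy.1, fun z hz => hy.2 z hz.1 hz.2⟩ hx

/-- Existence and uniqueness of the Laufer operator: `L = ℤ^𝒱` the lattice of a connected
negative definite graph `G`, `𝒩 ⊆ 𝒱` any subset.  For each `Z ∈ L` there is a unique cycle
`x(Z)` with (i) `m_n(x(Z)) = m_n(Z)` for `n ∈ 𝒩`, (ii) `(x(Z), E_v) ≤ 0` for `v ∉ 𝒩`, and
(iii) `x(Z)` minimal (coordinatewise) among cycles satisfying (i) and (ii). -/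
theorem stmt13 {V : Type*} [Fintype V] [DecidableEq V]
    (I : Matrix V V ℤ)
    (hsym : I.IsSymm)
    (hdiag : ∀ v : V, I v v < 0)
    (hoff : ∀ v w : V, v ≠ w → 0 ≤ I v w)
    (hnegdef : ∀ x : V → ℚ, x ≠ 0 → ∑ v, ∑ w, x v * (I v w : ℚ) * x w < 0)
    (hconn : ∀ v w : V, Relation.ReflTransGen (fun a b : V => a ≠ b ∧ I a b ≠ 0) v w)
    (N : Set V) (Z : V → ℤ) :
    ∃! x : V → ℤ,
      ((∀ n ∈ N, x n = Z n) ∧ (∀ v ∉ N, ∑ w, I v w * x w ≤ 0)) ∧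
      ∀ y : V → ℤ, (∀ n ∈ N, y n = Z n) → (∀ v ∉ N, ∑ w, I v w * y w ≤ 0) → x ≤ y :=
  stmt13_general I hoff hnegdef N Z
end

section
/- The Laufer operator x on the lattice of a connected negative definite graph satisfies: (1) monotonicity: if m_n(Z₁) ≤ m_n(Z₂) for all n ∈ 𝒩 then x(Z₁) ≤ x(Z₂); (2) idempotence: x(x(Z)) = x(Z); (3) if Z ∈ L and Z' ∈ L ⊗ ℚ satisfy m_n(Z) = m_n(Z') for all n ∈ 𝒩 and (Z', E_v) = 0 for all v ∈ 𝒱 \ 𝒩, then x(Z) ≥ Z', with equality when Z' ∈ L. -/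
/-!
Monotonicity and idempotence only use minimality together with the fact that `(·, E_v)` is
monotone in every coordinate except the `v`-th one, so that the pointwise minimum of two
candidates is again a candidate. For the comparison with a rational `Z'` harmonic off `𝒩`,
the difference `x(Z) - Z'` vanishes on `𝒩` and pairs nonpositively with every `E_v` off `𝒩`;
such a cycle `W` is effective, because its negative part satisfies
`(W⁻, W⁻) = (W⁻, W⁺) - (W⁻, W) ≥ 0`: the supports of `W⁻` and `W⁺` are disjoint, and `W⁻` lives
off `𝒩`, where `(W, E_v) ≤ 0`.
-/

/-- `x` is the Laufer cycle `x(Z)` of `Z` (relative to the graph with intersection matrix `I`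
and the subset `N` of vertices): it agrees with `Z` on `N`, has `(x, E_v) ≤ 0` off `N`, and
is coordinatewise minimal with these properties. -/
def IsLauferOf {V : Type*} [Fintype V] (I : Matrix V V ℤ) (N : Set V)
    (Z x : V → ℤ) : Prop :=
  (∀ n ∈ N, x n = Z n) ∧ (∀ v ∉ N, ∑ w, I v w * x w ≤ 0) ∧
  ∀ y : V → ℤ, (∀ n ∈ N, y n = Z n) → (∀ v ∉ N, ∑ w, I v w * y w ≤ 0) → x ≤ y

open Finset

section Pairing

variable {V R : Type*} [Fintype V]

lemma sum_mul_le_sum_mul_of_le_of_eq [Semiring R] [PartialOrder R] [IsOrderedRing R]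
    {A : Matrix V V R} (hoff : ∀ v w, v ≠ w → 0 ≤ A v w) {v : V} {x y : V → R}
    (hle : y ≤ x) (heq : y v = x v) :
    ∑ w, A v w * y w ≤ ∑ w, A v w * x w := by
  refine sum_le_sum fun w _ => ?_
  rcases eq_or_ne v w with rfl | hvw
  · rw [heq]
  · exact mul_le_mul_of_nonneg_left (hle w) (hoff v w hvw)

variable [CommRing R] [LinearOrder R] [IsStrictOrderedRing R]

lemma sum_sum_negPart_mul_posPart_nonneg {A : Matrix V V R} (hoff : ∀ v w, v ≠ w → 0 ≤ A v w)
    (W : V → R) : 0 ≤ ∑ v, ∑ w, W⁻ v * A v w * W⁺ w := by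
  refine sum_nonneg fun v _ => sum_nonneg fun w _ => ?_
  rcases eq_or_ne v w with rfl | hvw
  · rcases le_total (W v) 0 with h | h
    · simp [posPart_eq_zero.mpr h]
    · simp [negPart_eq_zero.mpr h]
  · have := hoff v w hvw
    have := negPart_nonneg (W v)
    have := posPart_nonneg (W w)
    simp only [Pi.negPart_apply, Pi.posPart_apply]
    positivity

lemma nonneg_of_eq_zero_of_sum_mul_nonpos {A : Matrix V V R}
    (hoff : ∀ v w, v ≠ w → 0 ≤ A v w)
    (hnegdef : ∀ x : V → R, x ≠ 0 → ∑ v, ∑ w, x v * A v w * x w < 0)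
    {N : Set V} {W : V → R} (hN : ∀ n ∈ N, W n = 0)
    (hle : ∀ v ∉ N, ∑ w, A v w * W w ≤ 0) : 0 ≤ W := by
  have hneg : ∑ v, W⁻ v * ∑ w, A v w * W w ≤ 0 := by
    refine sum_nonpos fun v _ => ?_
    rcases le_or_gt 0 (W v) with h | h
    · simp [negPart_eq_zero.mpr h]
    · have hv : v ∉ N := fun hv => h.ne (hN v hv)
      exact mul_nonpos_of_nonneg_of_nonpos (negPart_nonneg _) (hle v hv)
  have hsplit : ∑ v, ∑ w, W⁻ v * A v w * W⁻ w
      = ∑ v, ∑ w, W⁻ v * A v w * W⁺ w - ∑ v, W⁻ v * ∑ w, A v w * W w := by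
    rw [← sum_sub_distrib]
    refine sum_congr rfl fun v _ => ?_
    rw [mul_sum, ← sum_sub_distrib]
    refine sum_congr rfl fun w _ => ?_
    conv_rhs => rw [← posPart_sub_negPart (W w)]
    simp only [Pi.negPart_apply, Pi.posPart_apply]
    ring
  have hzero : W⁻ = 0 := by
    by_contra hne
    have := hnegdef _ hne
    linarith [sum_sum_negPart_mul_posPart_nonneg hoff W]
  exact negPart_eq_zero.mp hzero

end Pairing

namespace IsLauferOf

variable {V : Type*} [Fintype V] {I : Matrix V V ℤ} {N : Set V}

lemma mono (hoff : ∀ v w, v ≠ w → 0 ≤ I v w) {Z₁ Z₂ x₁ x₂ : V → ℤ}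
    (h₁ : IsLauferOf I N Z₁ x₁) (h₂ : IsLauferOf I N Z₂ x₂) (hZ : ∀ n ∈ N, Z₁ n ≤ Z₂ n) :
    x₁ ≤ x₂ := by
  obtain ⟨h₁N, h₁E, h₁min⟩ := h₁
  obtain ⟨h₂N, h₂E, -⟩ := h₂
  have hinfN : ∀ n ∈ N, (x₁ ⊓ x₂) n = Z₁ n := fun n hn => by
    simp [h₁N n hn, h₂N n hn, hZ n hn]
  have hinfE : ∀ v ∉ N, ∑ w, I v w * (x₁ ⊓ x₂) w ≤ 0 := by
    intro v hv
    rcases le_total (x₁ v) (x₂ v) with h | h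
    · exact (sum_mul_le_sum_mul_of_le_of_eq hoff inf_le_left (inf_eq_left.mpr h)).trans
        (h₁E v hv)
    · exact (sum_mul_le_sum_mul_of_le_of_eq hoff inf_le_right (inf_eq_right.mpr h)).trans
        (h₂E v hv)
  exact (h₁min _ hinfN hinfE).trans inf_le_right

lemma idem {Z x xx : V → ℤ} (hx : IsLauferOf I N Z x) (hxx : IsLauferOf I N x xx) :
    xx = x :=
  le_antisymm (hxx.2.2 x (fun _ _ => rfl) hx.2.1)
    (hx.2.2 xx (fun n hn => (hxx.1 n hn).trans (hx.1 n hn)) hxx.2.1)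

lemma ge_of_harmonic (hoff : ∀ v w, v ≠ w → 0 ≤ I v w)
    (hnegdef : ∀ x : V → ℚ, x ≠ 0 → ∑ v, ∑ w, x v * (I v w : ℚ) * x w < 0)
    {Z x : V → ℤ} {Z' : V → ℚ} (hx : IsLauferOf I N Z x) (hZ'N : ∀ n ∈ N, Z' n = Z n)
    (hZ'E : ∀ v ∉ N, ∑ w, (I v w : ℚ) * Z' w = 0) (v : V) : Z' v ≤ x v := by
  obtain ⟨hxN, hxE, -⟩ := hx
  have hdiff := nonneg_of_eq_zero_of_sum_mul_nonpos (A := I.map (↑))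
    (fun v w hvw => by simpa using hoff v w hvw) (by simpa using hnegdef)
    (W := fun v => (x v : ℚ) - Z' v) (N := N)
    (fun n hn => by simp [hZ'N n hn, hxN n hn])
    (fun v hv => by
      have hxv : ((∑ w, I v w * x w : ℤ) : ℚ) ≤ 0 := by exact_mod_cast hxE v hv
      simpa [mul_sub, sum_sub_distrib, hZ'E v hv] using hxv)
  exact sub_nonneg.mp (hdiff v)

lemma eq_of_harmonic (hoff : ∀ v w, v ≠ w → 0 ≤ I v w)
    (hnegdef : ∀ x : V → ℚ, x ≠ 0 → ∑ v, ∑ w, x v * (I v w : ℚ) * x w < 0)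
    {Z x m : V → ℤ} (hx : IsLauferOf I N Z x) (hmN : ∀ n ∈ N, m n = Z n)
    (hmE : ∀ v ∉ N, ∑ w, I v w * m w = 0) : m = x := by
  have hm_le : ∀ v, (m v : ℚ) ≤ x v :=
    hx.ge_of_harmonic hoff hnegdef (by exact_mod_cast hmN)
      (fun v hv => by exact_mod_cast hmE v hv)
  exact le_antisymm (fun v => by exact_mod_cast hm_le v)
    (hx.2.2 m hmN fun v hv => (hmE v hv).le)

end IsLauferOf

theorem stmt14_general {V : Type*} [Fintype V]
    (I : Matrix V V ℤ)
    (hoff : ∀ v w : V, v ≠ w → 0 ≤ I v w)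
    (hnegdef : ∀ x : V → ℚ, x ≠ 0 → ∑ v, ∑ w, x v * (I v w : ℚ) * x w < 0)
    (N : Set V) :
    (∀ Z₁ Z₂ x₁ x₂ : V → ℤ, IsLauferOf I N Z₁ x₁ → IsLauferOf I N Z₂ x₂ →
      (∀ n ∈ N, Z₁ n ≤ Z₂ n) → x₁ ≤ x₂) ∧
    (∀ Z x xx : V → ℤ, IsLauferOf I N Z x → IsLauferOf I N x xx → xx = x) ∧
    (∀ (Z x : V → ℤ) (Z' : V → ℚ), IsLauferOf I N Z x →
      (∀ n ∈ N, Z' n = (Z n : ℚ)) →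
      (∀ v ∉ N, ∑ w, (I v w : ℚ) * Z' w = 0) →
      (∀ v, Z' v ≤ (x v : ℚ)) ∧
      ((∀ v, ∃ m : ℤ, Z' v = (m : ℚ)) → ∀ v, Z' v = (x v : ℚ))) := by
  refine ⟨fun _ _ _ _ h₁ h₂ hZ => h₁.mono hoff h₂ hZ, fun _ _ _ hx hxx => hx.idem hxx, ?_⟩
  intro Z x Z' hx hZ'N hZ'E
  refine ⟨hx.ge_of_harmonic hoff hnegdef hZ'N hZ'E, fun hint => ?_⟩
  choose m hm using hint
  have hmx : m = x := hx.eq_of_harmonic hoff hnegdef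
    (fun n hn => by exact_mod_cast (hm n).symm.trans (hZ'N n hn))
    (fun v hv => by
      have hmv : ((∑ w, I v w * m w : ℤ) : ℚ) = 0 := by push_cast; simpa [hm] using hZ'E v hv
      exact_mod_cast hmv)
  intro v
  rw [hm v, hmx]

/-- Properties of the Laufer operator `x` on the lattice of a connected negative definite
graph: (1) monotonicity: `m_n(Z₁) ≤ m_n(Z₂)` on `𝒩` implies `x(Z₁) ≤ x(Z₂)`;
(2) idempotence: `x(x(Z)) = x(Z)`;
(3) if `Z' ∈ L ⊗ ℚ` agrees with `Z` on `𝒩` and `(Z', E_v) = 0` for all `v ∉ 𝒩`, then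
`x(Z) ≥ Z'`, with equality when `Z'` is integral. -/
theorem stmt14 {V : Type*} [Fintype V] [DecidableEq V]
    (I : Matrix V V ℤ)
    (hsym : I.IsSymm)
    (hdiag : ∀ v : V, I v v < 0)
    (hoff : ∀ v w : V, v ≠ w → 0 ≤ I v w)
    (hnegdef : ∀ x : V → ℚ, x ≠ 0 → ∑ v, ∑ w, x v * (I v w : ℚ) * x w < 0)
    (hconn : ∀ v w : V, Relation.ReflTransGen (fun a b : V => a ≠ b ∧ I a b ≠ 0) v w)
    (N : Set V) :
    (∀ Z₁ Z₂ x₁ x₂ : V → ℤ, IsLauferOf I N Z₁ x₁ → IsLauferOf I N Z₂ x₂ →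
      (∀ n ∈ N, Z₁ n ≤ Z₂ n) → x₁ ≤ x₂) ∧
    (∀ Z x xx : V → ℤ, IsLauferOf I N Z x → IsLauferOf I N x xx → xx = x) ∧
    (∀ (Z x : V → ℤ) (Z' : V → ℚ), IsLauferOf I N Z x →
      (∀ n ∈ N, Z' n = (Z n : ℚ)) →
      (∀ v ∉ N, ∑ w, (I v w : ℚ) * Z' w = 0) →
      (∀ v, Z' v ≤ (x v : ℚ)) ∧
      ((∀ v, ∃ m : ℤ, Z' v = (m : ℚ)) → ∀ v, Z' v = (x v : ℚ))) :=
  stmt14_general I hoff hnegdef N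
end

section
/- If Z ≤ x(Z), then x(Z) is computed by the following generalized Laufer sequence: set Z₀ = Z; given Z_i, if (Z_i, E_v) ≤ 0 for all v ∈ 𝒱 \ 𝒩 then Z_i = x(Z); otherwise choose v(i) ∈ 𝒱 \ 𝒩 with (Z_i, E_{v(i)}) > 0 and set Z_{i+1} = Z_i + E_{v(i)}. Every such sequence terminates at x(Z). Key invariant: if Z ≤ x(Z) and (Z, E_v) > 0 for some v ∈ 𝒱 \ 𝒩, then Z + E_v ≤ x(Z). -/
/-- The generalized Laufer sequence computes `x(Z)` when `Z ≤ x(Z)`: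
(1) key invariant: if `W` (with the same `𝒩`-coordinates as `Z`) satisfies `W ≤ x(Z)` and
`(W, E_v) > 0` for some `v ∉ 𝒩`, then `W + E_v ≤ x(Z)`;
(2) stopping criterion: if moreover `(W, E_v) ≤ 0` for all `v ∉ 𝒩`, then `W = x(Z)`;
(3) every sequence `W₀ = Z`, `W_{i+1} = W_i + E_{v(i)}` with `(W_i, E_{v(i)}) > 0`,
`v(i) ∉ 𝒩` (stationary once no such vertex exists) terminates at `x(Z)`. -/
theorem stmt15 {V : Type*} [Fintype V] [DecidableEq V]
    (I : Matrix V V ℤ)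
    (hsym : I.IsSymm)
    (hdiag : ∀ v : V, I v v < 0)
    (hoff : ∀ v w : V, v ≠ w → 0 ≤ I v w)
    (hnegdef : ∀ x : V → ℚ, x ≠ 0 → ∑ v, ∑ w, x v * (I v w : ℚ) * x w < 0)
    (hconn : ∀ v w : V, Relation.ReflTransGen (fun a b : V => a ≠ b ∧ I a b ≠ 0) v w)
    (N : Set V) (Z x : V → ℤ)
    (hx : IsLauferOf I N Z x) (hZx : Z ≤ x) :
    (∀ W : V → ℤ, (∀ n ∈ N, W n = Z n) → W ≤ x →
      ∀ v ∉ N, 0 < ∑ w, I v w * W w → W + Pi.single v 1 ≤ x) ∧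
    (∀ W : V → ℤ, (∀ n ∈ N, W n = Z n) → W ≤ x →
      (∀ v ∉ N, ∑ w, I v w * W w ≤ 0) → W = x) ∧
    (∀ W : ℕ → V → ℤ, W 0 = Z →
      (∀ i, (∃ v, v ∉ N ∧ 0 < ∑ w, I v w * W i w) →
        ∃ v, v ∉ N ∧ 0 < ∑ w, I v w * W i w ∧ W (i + 1) = W i + Pi.single v 1) →
      (∀ i, (∀ v, v ∉ N → ∑ w, I v w * W i w ≤ 0) → W (i + 1) = W i) →
      ∃ k, W k = x) := by
  obtain ⟨hxN, hxE, hxmin⟩ := hx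
  have part1 : ∀ W : V → ℤ, (∀ n ∈ N, W n = Z n) → W ≤ x →
      ∀ v ∉ N, 0 < ∑ w, I v w * W w → W + Pi.single v 1 ≤ x := by
    intro W hWN hWx v hv hpos
    have hv' : W v < x v := by
      by_contra h
      push_neg at h
      have heq : x v = W v := le_antisymm h (hWx v)
      have h1 : ∑ w, I v w * W w ≤ ∑ w, I v w * x w := by
        apply Finset.sum_le_sum
        intro w _
        rcases eq_or_ne w v with rfl | hne
        · rw [heq]
        · exact mul_le_mul_of_nonneg_left (hWx w) (hoff v w hne.symm)
      linarith [hxE v hv]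
    intro u
    simp only [Pi.add_apply]
    rcases eq_or_ne u v with rfl | hne
    · simp only [Pi.single_eq_same]; omega
    · simp only [Pi.single_eq_of_ne hne, add_zero]; exact hWx u
  have part2 : ∀ W : V → ℤ, (∀ n ∈ N, W n = Z n) → W ≤ x →
      (∀ v ∉ N, ∑ w, I v w * W w ≤ 0) → W = x := by
    intro W hWN hWx hWE
    exact le_antisymm (hxmin W hWN hWE) hWx |>.symm
  refine ⟨part1, part2, ?_⟩
  intro W hW0 hstep hstat
  have inv : ∀ i, (∀ n ∈ N, W i n = Z n) ∧ W i ≤ x := by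
    intro i
    induction i with
    | zero => exact ⟨fun n _ => by rw [hW0], hW0 ▸ hZx⟩
    | succ i ih =>
      by_cases h : ∃ v, v ∉ N ∧ 0 < ∑ w, I v w * W i w
      · obtain ⟨v, hv, hpos, heq⟩ := hstep i h
        refine ⟨?_, heq ▸ part1 (W i) ih.1 ih.2 v hv hpos⟩
        intro n hn
        rw [heq]
        have hne : n ≠ v := fun e => hv (e ▸ hn)
        simp only [Pi.add_apply, Pi.single_eq_of_ne hne, add_zero]
        exact ih.1 n hn
      · push_neg at h
        rw [hstat i h]
        exact ih
  have key : ∀ i : ℕ, W i = x ∨ ∑ v, (x v - W i v) ≤ ∑ v, (x v - Z v) - i := by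
    intro i
    induction i with
    | zero => right; simp [hW0]
    | succ i ih =>
      rcases ih with h | h
      · left
        have h0 : ∀ v, v ∉ N → ∑ w, I v w * W i w ≤ 0 := by
          rw [h]; exact fun v hv => hxE v hv
        rw [hstat i h0, h]
      · by_cases hb : ∃ v, v ∉ N ∧ 0 < ∑ w, I v w * W i w
        · obtain ⟨v, hv, hpos, heq⟩ := hstep i hb
          right
          have hsum : ∑ u, (x u - W (i+1) u) = (∑ u, (x u - W i u)) - 1 := by
            simp only [heq, Pi.add_apply, sub_add_eq_sub_sub,
              Finset.sum_sub_distrib]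
            have : ∑ u : V, Pi.single v (1:ℤ) u = 1 := by
              simp [Finset.sum_pi_single]
            rw [this]
          push_cast at h ⊢
          rw [hsum]
          linarith
        · push_neg at hb
          left
          have h0 : ∀ v, v ∉ N → ∑ w, I v w * W (i+1) w ≤ 0 := by
            rw [hstat i hb]; exact hb
          exact part2 (W (i+1)) (inv (i+1)).1 (inv (i+1)).2 h0
  have g0 : 0 ≤ ∑ v, (x v - Z v) := Finset.sum_nonneg fun v _ => by linarith [hZx v]
  set k : ℕ := (∑ v, (x v - Z v)).toNat + 1 with hk
  rcases key k with h | h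
  · exact ⟨k, h⟩
  · exfalso
    have hge : 0 ≤ ∑ v, (x v - W k v) :=
      Finset.sum_nonneg fun v _ => by linarith [(inv k).2 v]
    have hkz : (k : ℤ) = (∑ v, (x v - Z v)) + 1 := by
      rw [hk]; push_cast; rw [Int.toNat_of_nonneg g0]
    omega
end

section
/- Let Z ∈ L with Z = x(Z), n ∈ 𝒩, n' a node or end-face with a bamboo (chain of valency-2 vertices v₁,…,v_s with self-intersections -b₁,…,-b_s, where α/β = [b₁,…,b_s] is the negative continued fraction) connecting n and n'. Then the multiplicity at the neighbour u = v₁ of n satisfies m_u(Z) = ⌈(β·m_n(Z) + m_{n'}(Z))/α⌉, where m_{n'}(Z) = 0 if n' ∉ 𝒩. -/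
/-!
Let `p/q` be the (reduced) negative continued fraction of the string. For any sequence satisfying
the string inequalities, `p · m₁ - q · m₀` does not increase when the first vertex is removed from
the string (the difference is `p' · (b₁ m₁ - m₀ - m₂) ≥ 0`, with `p'` the numerator of the shorter
string), and for the empty string it equals the far endpoint; hence `p · m₁ ≥ q · m₀ + m_{s+1}`.
Conversely, choosing the multiplicities one after another as the least values allowed by this
bound yields an admissible sequence with `m₁ = ⌈(q · m₀ + m_{s+1}) / p⌉`, which the minimal
sequence cannot exceed.
-/

/-- The negative continued fraction `[b₁,…,b_s] = b₁ - 1/(b₂ - 1/(⋯))` of a list of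
rationals (using the convention `1/0 = 0`, so `negCF [b] = b`). -/
def negCF : List ℚ → ℚ
  | [] => 0
  | x :: xs => x - 1 / negCF xs

def negCFNumDen : List ℤ → ℤ × ℤ
  | [] => (1, 0)
  | x :: xs => (x * (negCFNumDen xs).1 - (negCFNumDen xs).2, (negCFNumDen xs).1)

theorem negCFNumDen_snd_nonneg_and_lt_fst :
    ∀ {l : List ℤ}, (∀ x ∈ l, 2 ≤ x) →
      0 ≤ (negCFNumDen l).2 ∧ (negCFNumDen l).2 < (negCFNumDen l).1
  | [], _ => by simp [negCFNumDen]
  | x :: xs, hl => by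
    obtain ⟨hq, hqp⟩ :=
      negCFNumDen_snd_nonneg_and_lt_fst fun y hy => hl y (List.mem_cons_of_mem x hy)
    have hx := hl x List.mem_cons_self
    simp only [negCFNumDen]
    constructor <;> nlinarith

theorem negCFNumDen_fst_pos {l : List ℤ} (hl : ∀ x ∈ l, 2 ≤ x) : 0 < (negCFNumDen l).1 :=
  (negCFNumDen_snd_nonneg_and_lt_fst hl).1.trans_lt (negCFNumDen_snd_nonneg_and_lt_fst hl).2

theorem negCFNumDen_snd_pos {l : List ℤ} (hl : ∀ x ∈ l, 2 ≤ x) (hne : l ≠ []) :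
    0 < (negCFNumDen l).2 := by
  obtain ⟨x, xs, rfl⟩ := List.exists_cons_of_ne_nil hne
  exact negCFNumDen_fst_pos fun y hy => hl y (List.mem_cons_of_mem x hy)

theorem isCoprime_negCFNumDen : ∀ l : List ℤ, IsCoprime (negCFNumDen l).1 (negCFNumDen l).2
  | [] => by simpa [negCFNumDen] using isCoprime_one_left
  | x :: xs => by
    obtain ⟨u, v, huv⟩ := isCoprime_negCFNumDen xs
    exact ⟨-v, u + v * x, by simp only [negCFNumDen]; linear_combination huv⟩

theorem negCF_map_intCast : ∀ {l : List ℤ}, (∀ x ∈ l, 2 ≤ x) →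
    negCF (l.map (↑)) = ((negCFNumDen l).1 : ℚ) / (negCFNumDen l).2
  | [], _ => by simp [negCF, negCFNumDen]
  | x :: xs, hl => by
    have hxs : ∀ y ∈ xs, 2 ≤ y := fun y hy => hl y (List.mem_cons_of_mem x hy)
    have hp : ((negCFNumDen xs).1 : ℚ) ≠ 0 := by exact_mod_cast (negCFNumDen_fst_pos hxs).ne'
    rw [List.map_cons, negCF, negCF_map_intCast hxs, one_div_div]
    simp only [negCFNumDen]
    push_cast
    field_simp

/-- The inequalities `m_{r-1} - b_r m_r + m_{r+1} ≤ 0` along a string, indexed from `0`: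
the entry `l[r]` sits at position `r + 1`, between the endpoints `m 0` and `m (l.length + 1)`. -/
def StringIneq (l : List ℤ) (m : ℕ → ℤ) : Prop :=
  ∀ r (hr : r < l.length), m r - l[r] * m (r + 1) + m (r + 2) ≤ 0

theorem stringIneq_cons {x : ℤ} {xs : List ℤ} {m : ℕ → ℤ} :
    StringIneq (x :: xs) m ↔ m 0 - x * m 1 + m 2 ≤ 0 ∧ StringIneq xs (fun r => m (r + 1)) := by
  constructor
  · intro h
    exact ⟨h 0 (by simp), fun r hr => h (r + 1) (by simpa using hr)⟩
  · rintro ⟨h₀, h⟩ (_ | r) hr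
    · exact h₀
    · exact h r (by simpa using hr)

theorem StringIneq.le_fst_mul_sub_snd_mul :
    ∀ {l : List ℤ} {m : ℕ → ℤ}, (∀ x ∈ l, 2 ≤ x) → StringIneq l m →
      m (l.length + 1) ≤ (negCFNumDen l).1 * m 1 - (negCFNumDen l).2 * m 0
  | [], m, _, _ => by simp [negCFNumDen]
  | x :: xs, m, hl, hm => by
    have hxs : ∀ y ∈ xs, 2 ≤ y := fun y hy => hl y (List.mem_cons_of_mem x hy)
    obtain ⟨h₀, htail⟩ := stringIneq_cons.1 hm
    have ih := le_fst_mul_sub_snd_mul hxs htail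
    have hp := mul_le_mul_of_nonneg_left (show m 2 ≤ x * m 1 - m 0 by linarith)
      (negCFNumDen_fst_pos hxs).le
    simp only [List.length_cons, negCFNumDen] at ih ⊢
    linarith

theorem ceil_intCast_div_le_iff {a p k : ℤ} (hp : 0 < p) :
    ⌈(a : ℚ) / p⌉ ≤ k ↔ a ≤ p * k := by
  rw [Int.ceil_le, div_le_iff₀ (by exact_mod_cast hp), mul_comm]
  exact_mod_cast Iff.rfl

theorem le_mul_ceil_intCast_div {a p : ℤ} (hp : 0 < p) : a ≤ p * ⌈(a : ℚ) / p⌉ :=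
  (ceil_intCast_div_le_iff hp).1 le_rfl

theorem exists_stringIneq_eq_ceil :
    ∀ {l : List ℤ}, (∀ x ∈ l, 2 ≤ x) → ∀ m₀ e : ℤ, ∃ M : ℕ → ℤ,
      M 0 = m₀ ∧ M (l.length + 1) = e ∧ StringIneq l M ∧
        M 1 = ⌈(((negCFNumDen l).2 * m₀ + e : ℤ) : ℚ) / (negCFNumDen l).1⌉
  | [], _, m₀, e =>
    ⟨fun r => if r = 0 then m₀ else e, rfl, rfl, fun _ hr => absurd hr (Nat.not_lt_zero _),
      by simp [negCFNumDen]⟩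
  | x :: xs, hl, m₀, e => by
    have hxs : ∀ y ∈ xs, 2 ≤ y := fun y hy => hl y (List.mem_cons_of_mem x hy)
    have hbound := le_mul_ceil_intCast_div (a := (negCFNumDen (x :: xs)).2 * m₀ + e)
      (negCFNumDen_fst_pos hl)
    set M₁ := ⌈(((negCFNumDen (x :: xs)).2 * m₀ + e : ℤ) : ℚ) / (negCFNumDen (x :: xs)).1⌉
    obtain ⟨M, hM₀, hMe, hM, hM₁⟩ := exists_stringIneq_eq_ceil hxs M₁ e
    simp only [negCFNumDen] at hbound
    have hnext : M 1 ≤ x * M₁ - m₀ := by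
      rw [hM₁, ceil_intCast_div_le_iff (negCFNumDen_fst_pos hxs)]
      linear_combination hbound
    refine ⟨fun | 0 => m₀ | r + 1 => M r, rfl, hMe, stringIneq_cons.2 ⟨?_, hM⟩, hM₀⟩
    simp only [hM₀]
    linarith

theorem eq_ceil_of_stringIneq_of_minimal {l : List ℤ} (hl : ∀ x ∈ l, 2 ≤ x) {m : ℕ → ℤ}
    (hm : StringIneq l m)
    (hmin : ∀ M : ℕ → ℤ, M 0 = m 0 → M (l.length + 1) = m (l.length + 1) → StringIneq l M →
      m 1 ≤ M 1) :
    m 1 = ⌈(((negCFNumDen l).2 * m 0 + m (l.length + 1) : ℤ) : ℚ) / (negCFNumDen l).1⌉ := by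
  obtain ⟨M, hM₀, hMe, hM, hM₁⟩ := exists_stringIneq_eq_ceil hl (m 0) (m (l.length + 1))
  refine le_antisymm (hM₁ ▸ hmin M hM₀ hMe hM) ?_
  rw [ceil_intCast_div_le_iff (negCFNumDen_fst_pos hl)]
  linarith [hm.le_fst_mul_sub_snd_mul hl]

theorem eq_negCFNumDen_of_div_eq_negCF {l : List ℤ} (hl : ∀ x ∈ l, 2 ≤ x) (hne : l ≠ [])
    {α β : ℤ} (hβ : 0 ≤ β) (hgcd : Int.gcd α β = 1)
    (h : (α : ℚ) / β = negCF (l.map (↑))) :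
    α = (negCFNumDen l).1 ∧ β = (negCFNumDen l).2 := by
  rw [negCF_map_intCast hl] at h
  have hq := negCFNumDen_snd_pos hl hne
  have hβ' : 0 < β := by
    refine hβ.lt_of_ne fun h0 => ?_
    have : (0 : ℚ) < (negCFNumDen l).1 / (negCFNumDen l).2 := by
      have := negCFNumDen_fst_pos hl
      positivity
    simp [← h, ← h0] at this
  exact Rat.div_int_inj hβ' hq hgcd
    (Int.isCoprime_iff_gcd_eq_one.1 (isCoprime_negCFNumDen l)) h

theorem stringIneq_map_range'_iff {s : ℕ} {b M : ℕ → ℤ} :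
    StringIneq ((List.range' 1 s).map b) M ↔
      ∀ r, 1 ≤ r → r ≤ s → M (r - 1) - b r * M r + M (r + 1) ≤ 0 := by
  have hget : ∀ t (ht : t < ((List.range' 1 s).map b).length),
      ((List.range' 1 s).map b)[t] = b (t + 1) := by
    intro t ht
    simp [add_comm]
  constructor
  · intro hM r hr₁ hr₂
    obtain ⟨t, rfl⟩ : ∃ t, r = t + 1 := ⟨r - 1, by omega⟩
    have h := hM t (by simp; omega)
    rwa [hget] at h
  · intro hM t ht
    rw [hget]
    exact hM (t + 1) (by omega) (by simpa using ht)

theorem stmt16_general (s : ℕ) (hs : 1 ≤ s) (b : ℕ → ℤ)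
    (hb : ∀ r, 1 ≤ r → r ≤ s → 2 ≤ b r)
    (α β : ℤ) (hβ : 0 ≤ β ∧ β < α)
    (hgcd : Int.gcd α β = 1)
    (hcf : (α : ℚ) / (β : ℚ) = negCF (((List.range' 1 s).map fun r => ((b r : ℚ)))))
    (m : ℕ → ℤ)
    (hineq : ∀ r, 1 ≤ r → r ≤ s → m (r - 1) - b r * m r + m (r + 1) ≤ 0)
    (hmin : ∀ m' : ℕ → ℤ, m' 0 = m 0 → m' (s + 1) = m (s + 1) →
      (∀ r, 1 ≤ r → r ≤ s → m' (r - 1) - b r * m' r + m' (r + 1) ≤ 0) →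
      ∀ r ≤ s + 1, m r ≤ m' r) :
    m 1 = ⌈((β : ℚ) * (m 0 : ℚ) + (m (s + 1) : ℚ)) / (α : ℚ)⌉ := by
  set l := (List.range' 1 s).map b
  have hlen : l.length = s := by simp [l]
  have hl : ∀ x ∈ l, 2 ≤ x := by
    simp only [l, List.mem_map, List.mem_range'_1]
    rintro _ ⟨r, hr, rfl⟩
    exact hb r hr.1 (by omega)
  obtain ⟨rfl, rfl⟩ := eq_negCFNumDen_of_div_eq_negCF hl (by rintro h; simp [← hlen, h] at hs)
    hβ.1 hgcd (by simpa [l, Function.comp_def] using hcf)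
  have key := eq_ceil_of_stringIneq_of_minimal hl (stringIneq_map_range'_iff.2 hineq)
    fun M h₀ he hM => hmin M h₀ (hlen ▸ he) (stringIneq_map_range'_iff.1 hM) 1 (by omega)
  rw [key, hlen]
  push_cast
  ring

/-- Multiplicities along a bamboo.  Let `v₁,…,v_s` be a bamboo (chain of valency-two
vertices) with self-intersections `-b₁,…,-b_s` (`b_j ≥ 2`) connecting `n` and `n'`, and let
`α/β = [b₁,…,b_s]` be the corresponding negative continued fraction (`0 ≤ β < α`,
`gcd(α,β) = 1`).  If `Z = x(Z)`, i.e. `(m_r) = (m_{v_r}(Z))` is the minimal integral sequence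
with fixed endpoints `m₀ = m_n(Z)`, `m_{s+1} = m_{n'}(Z)` satisfying
`m_{r-1} - b_r·m_r + m_{r+1} ≤ 0` for `1 ≤ r ≤ s`, then the multiplicity at the neighbour
`u = v₁` of `n` is `m₁ = ⌈(β·m₀ + m_{s+1})/α⌉`. -/
theorem stmt16 (s : ℕ) (hs : 1 ≤ s) (b : ℕ → ℤ)
    (hb : ∀ r, 1 ≤ r → r ≤ s → 2 ≤ b r)
    (α β : ℤ) (hαpos : 0 < α) (hβ : 0 ≤ β ∧ β < α)
    (hgcd : Int.gcd α β = 1)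
    (hcf : (α : ℚ) / (β : ℚ) = negCF (((List.range' 1 s).map fun r => ((b r : ℚ)))))
    (m : ℕ → ℤ)
    (hineq : ∀ r, 1 ≤ r → r ≤ s → m (r - 1) - b r * m r + m (r + 1) ≤ 0)
    (hmin : ∀ m' : ℕ → ℤ, m' 0 = m 0 → m' (s + 1) = m (s + 1) →
      (∀ r, 1 ≤ r → r ≤ s → m' (r - 1) - b r * m' r + m' (r + 1) ≤ 0) →
      ∀ r ≤ s + 1, m r ≤ m' r) :
    m 1 = ⌈((β : ℚ) * (m 0 : ℚ) + (m (s + 1) : ℚ)) / (α : ℚ)⌉ :=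
  stmt16_general s hs b hb α β hβ hgcd hcf m hineq hmin
end

section
/- Let G be a connected negative definite graph whose plumbed manifold is a rational homology sphere, n ∈ 𝒩 a node and e an end of a leg of n with fraction α_e/β_e. Then D_e = α_e E_e^* - E_n^* is an effective integral cycle supported exactly on the leg containing e, with m_{u_e}(D_e) = 1 at the neighbour u_e of n on this leg. Moreover the family (D_e)_{e ∈ ℰ} is a ℤ-basis of the kernel of the restriction map V_Z → V_Z^𝒩, where V_Z = ℤ⟨E_v^* : v ∈ 𝒩 ∪ ℰ⟩ ∩ L. -/
/-!
Along a leg `n = P 0, P 1, …, P s = e` write `b_j = -(E_{P j}, E_{P j})` and let `d_j` be the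
numerators of the continued fractions, `d_0 = 0`, `d_1 = 1`, `d_{j+1} = b_j d_j - d_{j-1}`. The
recurrence says exactly that the cycle `y = ∑_{j=1}^s d_j E_{P j}` satisfies
`(y, E_w) = δ_{wn} - d_{s+1} δ_{we}`, and `d_{s+1}` is the determinant `α_e` of the leg, so `y` and
`D_e` have the same intersection with every `E_w`; negative definiteness forces `D_e = y`. The
`d_j` are positive because the truncation `∑_{j ≤ k} d_j E_{P j}` has self-intersection
`-d_k d_{k+1}`.

For the basis statement, if `c_e` is the coefficient of `E_e^*` in `x`, then
`x - ∑_e (c_e / α_e) D_e` vanishes on the nodes and is orthogonal to every `E_v` with `v` not a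
node, hence is zero. Distinct legs are disjoint, so evaluating at the first
vertex `u_e` of each leg identifies the coefficients with the integers `x(u_e)`.
-/

/-- The degree (valency) of a vertex in the graph with intersection matrix `I`. -/
def degG {V : Type*} [Fintype V] [DecidableEq V] (I : Matrix V V ℤ) (v : V) : ℕ :=
  (Finset.univ.filter fun w => w ≠ v ∧ I v w ≠ 0).card

open Matrix

namespace Matrix

theorem det_succ_succ_of_tridiagonal {R : Type*} [CommRing R] (a : ℕ → ℕ → R) (k : ℕ)
    (ha : ∀ i j, i ≤ k + 1 → j ≤ k + 1 → i + 2 ≤ j ∨ j + 2 ≤ i → a i j = 0) :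
    (of fun i j : Fin (k + 2) => a i j).det =
      a (k + 1) (k + 1) * (of fun i j : Fin (k + 1) => a i j).det
        - a (k + 1) k * a k (k + 1) * (of fun i j : Fin k => a i j).det := by
  let A : Matrix (Fin (k + 2)) (Fin (k + 2)) R := of fun i j => a i j
  have hminor : (A.submatrix Fin.castSucc (Fin.castSucc (Fin.last k)).succAbove).det
      = a k (k + 1) * (of fun i j : Fin k => a i j).det := by
    rw [det_succ_column _ (Fin.last k), Fin.sum_univ_castSucc, Finset.sum_eq_zero, zero_add]
    · have : (A.submatrix Fin.castSucc (Fin.castSucc (Fin.last k)).succAbove).submatrix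
          (Fin.last k).succAbove (Fin.last k).succAbove = of fun i j : Fin k => a i j := by
        ext i j
        simp [A, Fin.succAbove_of_castSucc_lt, Fin.castSucc_lt_last]
      rw [this]
      simp [A, ← two_mul]
    · intro i _
      have : a i (k + 1) = 0 := ha _ _ (by omega) le_rfl (by omega)
      simp [A, Fin.succAbove_of_le_castSucc, this]
  have hlast : A.submatrix Fin.castSucc Fin.castSucc = of fun i j : Fin (k + 1) => a i j := by
    ext i j; simp [A]
  rw [det_succ_row A (Fin.last (k + 1)), Fin.sum_univ_castSucc, Fin.sum_univ_castSucc,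
    Finset.sum_eq_zero, zero_add, Fin.succAbove_last, hminor, hlast]
  · simp [A, ← two_mul, pow_mul]
    ring
  · intro j _
    have : a (k + 1) j = 0 := ha _ _ le_rfl (by omega) (by omega)
    simp [A, this]

lemma eq_zero_of_forall_eq_zero_or_mulVec_eq_zero {V R : Type*} [Fintype V] [Semiring R]
    [Preorder R] {Q : Matrix V V R} (hneg : ∀ x : V → R, x ≠ 0 → x ⬝ᵥ (Q *ᵥ x) < 0)
    {z : V → R} (hz : ∀ v, z v = 0 ∨ (Q *ᵥ z) v = 0) : z = 0 := by
  by_contra hne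
  have hzero : z ⬝ᵥ (Q *ᵥ z) = 0 :=
    Finset.sum_eq_zero fun v _ => by rcases hz v with h | h <;> simp [h]
  exact (hneg z hne).ne hzero

end Matrix

section Degree

variable {V : Type*} [Fintype V] [DecidableEq V] {I : Matrix V V ℤ} {v a b c : V}

lemma eq_of_degG_eq_one (hv : degG I v = 1) (ha : a ≠ v ∧ I v a ≠ 0) (hc : c ≠ v ∧ I v c ≠ 0) :
    c = a :=
  Finset.card_le_one.mp hv.le c (by simpa using hc) a (by simpa using ha)

lemma eq_or_eq_of_degG_eq_two (hv : degG I v = 2) (hab : a ≠ b) (ha : a ≠ v ∧ I v a ≠ 0)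
    (hb : b ≠ v ∧ I v b ≠ 0) (hc : c ≠ v ∧ I v c ≠ 0) : c = a ∨ c = b := by
  have hsub : ({a, b} : Finset V) ⊆ Finset.univ.filter fun w => w ≠ v ∧ I v w ≠ 0 := by
    intro w hw
    rcases Finset.mem_insert.mp hw with rfl | hw
    · simpa using ha
    · rw [Finset.mem_singleton.mp hw]; simpa using hb
  have heq := Finset.eq_of_subset_of_card_le hsub (by rw [Finset.card_pair hab]; exact hv.le)
  simpa [← heq] using (show c ∈ Finset.univ.filter fun w => w ≠ v ∧ I v w ≠ 0 by simpa using hc)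
end Degree

section Intersection

variable {V : Type*} [Fintype V] (I : Matrix V V ℤ)

lemma sum_sum_mul_mul_eq_dotProduct_mulVec (x : V → ℚ) :
    ∑ v, ∑ w, x v * (I v w : ℚ) * x w = x ⬝ᵥ (I.map Int.cast *ᵥ x) := by
  simp [dotProduct, mulVec, Finset.mul_sum, mul_assoc]

variable [DecidableEq V]

lemma mulVec_eq_neg_single {v : V} {E : V → ℚ}
    (hE : ∀ w, ∑ u, (I w u : ℚ) * E u = if v = w then -1 else 0) :
    I.map Int.cast *ᵥ E = -Pi.single v 1 := funext fun w => by
  simp only [mulVec, dotProduct, map_apply, hE, Pi.neg_apply, Pi.single_apply, eq_comm (a := w)]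
  split_ifs <;> simp

end Intersection

section LegCycle

variable {V : Type*}

/-- `legNum I P (k + 1)` is the determinant of the negated intersection matrix of
`P 1, …, P k` (see `IsLeg.det_eq`), i.e. the numerator of `[b_1, …, b_k]`. -/
def legNum (I : Matrix V V ℤ) (P : ℕ → V) : ℕ → ℤ
  | 0 => 0
  | 1 => 1
  | n + 2 => -I (P (n + 1)) (P (n + 1)) * legNum I P (n + 1) - legNum I P n

variable [DecidableEq V]

/-- For `k = s` this is the cycle `D_e` of the leg (`IsLeg.abs_det_smul_sub_eq_legCycle`). -/
noncomputable def legCycle (I : Matrix V V ℤ) (P : ℕ → V) (k : ℕ) : V → ℚ :=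
  ∑ j ∈ Finset.Icc 1 k, (legNum I P j : ℚ) • Pi.single (P j) 1

variable {I : Matrix V V ℤ} {P : ℕ → V}

lemma legCycle_apply_of_forall_ne {k : ℕ} {v : V} (hv : ∀ j, 1 ≤ j → j ≤ k → v ≠ P j) :
    legCycle I P k v = 0 := by
  simp only [legCycle, Finset.sum_apply, Pi.smul_apply, Pi.single_apply, smul_eq_mul]
  exact Finset.sum_eq_zero fun j hj => by
    rw [if_neg (hv j (Finset.mem_Icc.mp hj).1 (Finset.mem_Icc.mp hj).2), mul_zero]

lemma exists_intCast_eq_legCycle_apply {k : ℕ} {v : V} : ∃ m : ℤ, (m : ℚ) = legCycle I P k v :=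
  ⟨∑ j ∈ Finset.Icc 1 k, legNum I P j * if v = P j then 1 else 0, by
    simp [legCycle, Finset.sum_apply, Pi.single_apply]⟩

end LegCycle

section Legs

variable {V : Type*} [Fintype V] [DecidableEq V]

structure IsLeg (I : Matrix V V ℤ) (e : V) (s : ℕ) (P : ℕ → V) : Prop where
  one_le : 1 ≤ s
  apply_len : P s = e
  degG_end : degG I e = 1
  three_le_degG_node : 3 ≤ degG I (P 0)
  degG_interior : ∀ j, 1 ≤ j → j < s → degG I (P j) = 2
  adj : ∀ j < s, I (P j) (P (j + 1)) = 1
  injective : Function.Injective fun j : Fin (s + 1) => P j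

namespace IsLeg

variable {I : Matrix V V ℤ} {e : V} {s : ℕ} {P : ℕ → V}

lemma inj (L : IsLeg I e s P) {j k : ℕ} (hj : j ≤ s) (hk : k ≤ s) (h : P j = P k) : j = k :=
  congrArg Fin.val (L.injective (a₁ := ⟨j, by omega⟩) (a₂ := ⟨k, by omega⟩) h)

lemma degG_le_two (L : IsLeg I e s P) {t : ℕ} (h1 : 1 ≤ t) (ht : t ≤ s) :
    degG I (P t) ≤ 2 := by
  rcases ht.lt_or_eq with ht | rfl
  · exact (L.degG_interior t h1 ht).le
  · rw [L.apply_len, L.degG_end]; omega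

lemma adj_pred (L : IsLeg I e s P) (hsym : I.IsSymm) {t : ℕ} (h1 : 1 ≤ t) (ht : t ≤ s) :
    I (P t) (P (t - 1)) = 1 := by
  obtain ⟨u, rfl⟩ : ∃ u, t = u + 1 := ⟨t - 1, by omega⟩
  rw [hsym.apply]
  exact L.adj u (by omega)

lemma eq_of_adj (L : IsLeg I e s P) (hsym : I.IsSymm) {t : ℕ} {w : V} (h1 : 1 ≤ t) (ht : t ≤ s)
    (hw : w ≠ P t) (hI : I (P t) w ≠ 0) : w = P (t - 1) ∨ t < s ∧ w = P (t + 1) := by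
  have hpred : P (t - 1) ≠ P t ∧ I (P t) (P (t - 1)) ≠ 0 :=
    ⟨fun h => by have := L.inj (by omega) ht h; omega, by rw [L.adj_pred hsym h1 ht]; simp⟩
  rcases ht.lt_or_eq with ht | rfl
  · have hsucc : P (t + 1) ≠ P t ∧ I (P t) (P (t + 1)) ≠ 0 :=
      ⟨fun h => by have := L.inj (by omega) ht.le h; omega, by rw [L.adj t ht]; simp⟩
    have hne : P (t - 1) ≠ P (t + 1) := fun h => by have := L.inj (by omega) ht h; omega
    rcases eq_or_eq_of_degG_eq_two (L.degG_interior t h1 ht) hne hpred hsucc ⟨hw, hI⟩ with h | h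
    · exact .inl h
    · exact .inr ⟨ht, h⟩
  · exact .inl (eq_of_degG_eq_one (L.apply_len ▸ L.degG_end) hpred ⟨hw, hI⟩)

lemma apply_eq_zero (L : IsLeg I e s P) (hsym : I.IsSymm) {t i : ℕ} (h1 : 1 ≤ t) (ht : t ≤ s)
    (hi : i ≤ s) (hti : t + 2 ≤ i ∨ i + 2 ≤ t) : I (P t) (P i) = 0 := by
  by_contra hI
  have hne : P i ≠ P t := fun h => by have := L.inj hi ht h; omega
  rcases L.eq_of_adj hsym h1 ht hne hI with h | ⟨_, h⟩
  · have := L.inj hi (by omega) h; omega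
  · have := L.inj hi (by omega) h; omega

lemma mulVec_single (L : IsLeg I e s P) (hsym : I.IsSymm) {t : ℕ} (h1 : 1 ≤ t) (ht : t ≤ s) :
    I.map Int.cast *ᵥ Pi.single (P t) (1 : ℚ) = Pi.single (P (t - 1)) 1
      + (I (P t) (P t) : ℚ) • Pi.single (P t) 1
      + if t < s then Pi.single (P (t + 1)) 1 else 0 := by
  have hpred : P (t - 1) ≠ P t := fun h => by have := L.inj (by omega) ht h; omega
  have hsucc : t < s → P (t + 1) ≠ P t := fun h' h => by have := L.inj (by omega) ht h; omega
  have hps : t < s → P (t - 1) ≠ P (t + 1) := fun h' h => by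
    have := L.inj (by omega) (Nat.succ_le_of_lt h') h; omega
  rw [mulVec_single_one]
  funext w
  simp only [col_apply, map_apply, Pi.add_apply, Pi.smul_apply, smul_eq_mul, Pi.single_apply,
    hsym.apply (P t) w]
  by_cases hwt : w = P t
  · subst hwt
    split_ifs <;> simp_all
  by_cases hI : I (P t) w = 0
  · have hwp : w ≠ P (t - 1) := by rintro rfl; simp [L.adj_pred hsym h1 ht] at hI
    have hws : t < s → w ≠ P (t + 1) := by rintro h rfl; simp [L.adj t h] at hI
    split_ifs <;> simp_all
  rcases L.eq_of_adj hsym h1 ht hwt hI with rfl | ⟨hts, rfl⟩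
  · split_ifs <;> simp_all [L.adj_pred hsym h1 ht]
  · split_ifs <;> simp_all [L.adj t hts]

lemma legCycle_apply (L : IsLeg I e s P) {j k : ℕ} (h1 : 1 ≤ j) (hjk : j ≤ k) (hk : k ≤ s) :
    legCycle I P k (P j) = legNum I P j := by
  simp only [legCycle, Finset.sum_apply, Pi.smul_apply, Pi.single_apply, smul_eq_mul]
  rw [Finset.sum_eq_single j]
  · simp
  · intro i hi hij
    rw [if_neg fun h => hij (L.inj (by omega) (by simp at hi; omega) h).symm, mul_zero]
  · simp [h1, hjk]

lemma legCycle_apply_of_lt (L : IsLeg I e s P) {i k : ℕ} (hk : k ≤ s) (hi : i ≤ s)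
    (hik : i = 0 ∨ k < i) : legCycle I P k (P i) = 0 :=
  legCycle_apply_of_forall_ne fun j h1 hj h => by have := L.inj hi (by omega) h; omega

lemma mulVec_legCycle (L : IsLeg I e s P) (hsym : I.IsSymm) {k : ℕ} (hk : k ≤ s) :
    I.map Int.cast *ᵥ legCycle I P k
      = Pi.single (P 0) 1 - (legNum I P (k + 1) : ℚ) • Pi.single (P k) 1
      + if k < s then (legNum I P k : ℚ) • Pi.single (P (k + 1)) 1 else 0 := by
  induction k with
  | zero => simp [legCycle, legNum]
  | succ k ih =>
    have hsplit : legCycle I P (k + 1)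
        = legCycle I P k + (legNum I P (k + 1) : ℚ) • Pi.single (P (k + 1)) 1 :=
      Finset.sum_Icc_succ_top (by omega) _
    rw [hsplit, mulVec_add, mulVec_smul, ih (by omega), L.mulVec_single hsym (by omega) hk,
      if_pos (by omega : k < s)]
    simp only [legNum, Nat.add_sub_cancel]
    push_cast
    split_ifs <;> module

lemma legCycle_dotProduct_mulVec (L : IsLeg I e s P) (hsym : I.IsSymm) {k : ℕ} (h1 : 1 ≤ k)
    (hk : k ≤ s) :
    legCycle I P k ⬝ᵥ (I.map Int.cast *ᵥ legCycle I P k)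
      = -(legNum I P k * legNum I P (k + 1) : ℚ) := by
  rw [L.mulVec_legCycle hsym hk]
  split_ifs with hks
  · simp [dotProduct_add, dotProduct_sub, dotProduct_smul, dotProduct_single,
      L.legCycle_apply h1 le_rfl hk, L.legCycle_apply_of_lt hk (by omega) (.inl rfl),
      L.legCycle_apply_of_lt hk (by omega) (.inr (by omega) : k + 1 = 0 ∨ k < k + 1)]
    ring
  · simp [dotProduct_sub, dotProduct_smul, dotProduct_single,
      L.legCycle_apply h1 le_rfl hk, L.legCycle_apply_of_lt hk (by omega) (.inl rfl)]
    ring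

lemma legNum_pos (L : IsLeg I e s P) (hsym : I.IsSymm)
    (hneg : ∀ x : V → ℚ, x ≠ 0 → x ⬝ᵥ (I.map Int.cast *ᵥ x) < 0) {j : ℕ} (h1 : 1 ≤ j)
    (hj : j ≤ s + 1) : 0 < legNum I P j := by
  induction j, h1 using Nat.le_induction with
  | base => simp [legNum]
  | succ k h1 ih =>
    have hk : 0 < legNum I P k := ih (by omega)
    have hne : legCycle I P k ≠ 0 := fun h => by
      have hval := L.legCycle_apply (k := k) h1 le_rfl (by omega)
      rw [h, Pi.zero_apply] at hval
      exact hk.ne' (by exact_mod_cast hval.symm)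
    have hprod := hneg _ hne
    rw [L.legCycle_dotProduct_mulVec hsym h1 (by omega), neg_lt_zero] at hprod
    exact_mod_cast pos_of_mul_pos_right hprod (by exact_mod_cast hk.le)

lemma det_eq (L : IsLeg I e s P) (hsym : I.IsSymm) {k : ℕ} (hk : k ≤ s) :
    (of fun i j : Fin k => (I (P (i + 1)) (P (j + 1)) : ℚ)).det
      = (-1) ^ k * legNum I P (k + 1) := by
  induction k using Nat.twoStepInduction with
  | zero => simp [legNum]
  | one => simp [legNum]
  | more k ih₀ ih₁ =>
    have hrec := det_succ_succ_of_tridiagonal (fun i j => (I (P (i + 1)) (P (j + 1)) : ℚ)) k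
      fun i j hi hj hij => by
        simpa using L.apply_eq_zero hsym (t := i + 1) (i := j + 1) (by omega) (by omega)
          (by omega) (by omega)
    beta_reduce at hrec
    have hadj : I (P (k + 1 + 1)) (P (k + 1)) = 1 := by
      rw [hsym.apply]; exact L.adj (k + 1) (by omega)
    rw [hrec, ih₀ (by omega), ih₁ (by omega), hadj, L.adj (k + 1) (by omega)]
    simp only [legNum]
    push_cast
    ring

lemma eq_legCycle_of_mulVec_eq (L : IsLeg I e s P) (hsym : I.IsSymm)
    (hneg : ∀ x : V → ℚ, x ≠ 0 → x ⬝ᵥ (I.map Int.cast *ᵥ x) < 0) {D : V → ℚ}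
    (hD : I.map Int.cast *ᵥ D = Pi.single (P 0) 1 - (legNum I P (s + 1) : ℚ) • Pi.single e 1) :
    D = legCycle I P s := by
  refine sub_eq_zero.mp (eq_zero_of_forall_eq_zero_or_mulVec_eq_zero hneg fun v => .inr ?_)
  rw [mulVec_sub, hD, L.mulVec_legCycle hsym le_rfl, if_neg (lt_irrefl s), L.apply_len]
  simp

lemma eq_of_apply_eq {e' : V} {s' : ℕ} {P' : ℕ → V} (L : IsLeg I e s P)
    (L' : IsLeg I e' s' P') (hsym : I.IsSymm) {j j' : ℕ} (hj1 : 1 ≤ j) (hj : j ≤ s)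
    (hj1' : 1 ≤ j') (hj' : j' ≤ s') (h : P j = P' j') : e = e' := by
  -- Walk towards `e`: the next vertex `P (j + 1)` is a neighbour of `P' j'`, hence again on the
  -- leg `P'`, and it cannot be the node `P' 0` because its degree is at most `2`.
  obtain ⟨m, hm⟩ : ∃ m, s = j + m := ⟨s - j, by omega⟩
  induction m generalizing j j' with
  | zero =>
    rcases hj'.lt_or_eq with hlt | rfl
    · have := L'.degG_interior j' hj1' hlt
      rw [← h, show j = s by omega, L.apply_len, L.degG_end] at this
      omega
    · rw [← L.apply_len, ← L'.apply_len, hm, add_zero, h]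
  | succ m ih =>
    have hne : P (j + 1) ≠ P' j' := fun h' => by
      have := L.inj (by omega) hj (h'.trans h.symm); omega
    have hadj : I (P' j') (P (j + 1)) ≠ 0 := by rw [← h, L.adj j (by omega)]; simp
    rcases L'.eq_of_adj hsym hj1' hj' hne hadj with h' | ⟨hlt, h'⟩
    · rcases hj1'.lt_or_eq with hlt | rfl
      · exact ih (by omega) (by omega) (by omega) (by omega) h' (by omega)
      · have := L.degG_le_two (t := j + 1) (by omega) (by omega)
        rw [h', Nat.sub_self] at this
        exact absurd L'.three_le_degG_node (by omega)
    · exact ih (by omega) (by omega) (by omega) hlt h' (by omega)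

lemma abs_det_eq (L : IsLeg I e s P) (hsym : I.IsSymm)
    (hneg : ∀ x : V → ℚ, x ≠ 0 → x ⬝ᵥ (I.map Int.cast *ᵥ x) < 0) :
    |(of fun i j : Fin s => (I (P (i + 1)) (P (j + 1)) : ℚ)).det| = legNum I P (s + 1) := by
  rw [L.det_eq hsym le_rfl, abs_mul, abs_pow, abs_neg, abs_one, one_pow, one_mul,
    abs_of_pos (by exact_mod_cast L.legNum_pos hsym hneg (by omega) le_rfl)]

lemma abs_det_smul_sub_eq_legCycle (L : IsLeg I e s P) (hsym : I.IsSymm)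
    (hneg : ∀ x : V → ℚ, x ≠ 0 → x ⬝ᵥ (I.map Int.cast *ᵥ x) < 0) {E : V → V → ℚ}
    (hE : ∀ v, I.map Int.cast *ᵥ E v = -Pi.single v 1) :
    |(of fun i j : Fin s => (I (P (i + 1)) (P (j + 1)) : ℚ)).det| • E e - E (P 0)
      = legCycle I P s := by
  refine L.eq_legCycle_of_mulVec_eq hsym hneg ?_
  rw [L.abs_det_eq hsym hneg, mulVec_sub, mulVec_smul, hE, hE]
  module

lemma legCycle_apply_pos (L : IsLeg I e s P) (hsym : I.IsSymm)
    (hneg : ∀ x : V → ℚ, x ≠ 0 → x ⬝ᵥ (I.map Int.cast *ᵥ x) < 0) {j : ℕ} (h1 : 1 ≤ j)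
    (hj : j ≤ s) : 0 < legCycle I P s (P j) := by
  rw [L.legCycle_apply h1 hj le_rfl]
  exact_mod_cast L.legNum_pos hsym hneg h1 (by omega)

lemma legCycle_apply_one (L : IsLeg I e s P) : legCycle I P s (P 1) = 1 := by
  simp [L.legCycle_apply le_rfl L.one_le le_rfl, legNum]

end IsLeg

section Ends

variable {I : Matrix V V ℤ} {s : V → ℕ} {p : V → ℕ → V}

lemma sum_smul_legCycle_apply_one (hsym : I.IsSymm)
    (hL : ∀ e, degG I e = 1 → IsLeg I e (s e) (p e)) (c : {e : V // degG I e = 1} → ℚ)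
    (e₀ : {e : V // degG I e = 1}) :
    (∑ e, c e • legCycle I (p e) (s e)) (p e₀ 1) = c e₀ := by
  have L₀ := hL e₀ e₀.2
  rw [Finset.sum_apply, Finset.sum_eq_single e₀]
  · simp [L₀.legCycle_apply_one]
  · intro e _ hne
    rw [Pi.smul_apply, legCycle_apply_of_forall_ne, smul_zero]
    intro j h1 hj h
    exact hne (Subtype.ext ((hL e e.2).eq_of_apply_eq L₀ hsym h1 hj le_rfl L₀.one_le h.symm))
  · simp

lemma eq_sum_smul_legCycle (hsym : I.IsSymm)
    (hneg : ∀ x : V → ℚ, x ≠ 0 → x ⬝ᵥ (I.map Int.cast *ᵥ x) < 0) (Estar : V → V → ℚ)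
    (hEstar : ∀ v, I.map Int.cast *ᵥ Estar v = -Pi.single v 1)
    (hL : ∀ e, degG I e = 1 → IsLeg I e (s e) (p e)) (cf : V → ℤ) {x : V → ℚ}
    (hx : x = ∑ u ∈ Finset.univ.filter (fun u => 3 ≤ degG I u ∨ degG I u = 1),
      (cf u : ℚ) • Estar u)
    (hnodes : ∀ v, 3 ≤ degG I v → x v = 0) :
    x = ∑ e : {e : V // degG I e = 1},
      ((cf e : ℚ) / legNum I (p e) (s e + 1)) • legCycle I (p e) (s e) := by
  refine sub_eq_zero.mp (eq_zero_of_forall_eq_zero_or_mulVec_eq_zero hneg fun v => ?_)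
  by_cases hv : 3 ≤ degG I v
  · refine .inl ?_
    rw [Pi.sub_apply, hnodes v hv, Finset.sum_apply, Finset.sum_eq_zero, sub_zero]
    intro e _
    rw [Pi.smul_apply, legCycle_apply_of_forall_ne, smul_zero]
    rintro j h1 hj rfl
    exact absurd ((hL e e.2).degG_le_two h1 hj) (by omega)
  · refine .inr ?_
    have hQx : (I.map Int.cast *ᵥ x) v = -(if degG I v = 1 then (cf v : ℚ) else 0) := by
      simp [hx, mulVec_sum, mulVec_smul, hEstar, Finset.sum_apply, Pi.single_apply, hv]
    have hQy : ∀ e : {e : V // degG I e = 1}, (I.map Int.cast *ᵥ legCycle I (p e) (s e)) v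
        = -(if v = e then (legNum I (p e) (s e + 1) : ℚ) else 0) := by
      intro e
      have L := hL e e.2
      rw [L.mulVec_legCycle hsym le_rfl, if_neg (lt_irrefl _), L.apply_len]
      have : p e 0 ≠ v := fun h => hv (h ▸ L.three_le_degG_node)
      simp [Pi.single_apply, this]
    rw [mulVec_sub, Pi.sub_apply, hQx, mulVec_sum, Finset.sum_apply]
    simp only [mulVec_smul, Pi.smul_apply, hQy, smul_eq_mul, mul_neg, Finset.sum_neg_distrib,
      mul_ite, mul_zero]
    split_ifs with hv1
    · rw [Finset.sum_eq_single_of_mem ⟨v, hv1⟩ (Finset.mem_univ _)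
        fun e _ hne => if_neg fun h => hne (Subtype.ext h.symm), if_pos rfl,
        div_mul_cancel₀ _
          (by exact_mod_cast ((hL v hv1).legNum_pos hsym hneg (by omega) le_rfl).ne')]
      ring
    · rw [Finset.sum_eq_zero fun (e : {e : V // degG I e = 1}) _ =>
        if_neg fun (h : v = e) => hv1 (h ▸ e.2)]
      ring

lemma existsUnique_sum_smul_legCycle (hsym : I.IsSymm)
    (hneg : ∀ x : V → ℚ, x ≠ 0 → x ⬝ᵥ (I.map Int.cast *ᵥ x) < 0) (Estar : V → V → ℚ)
    (hEstar : ∀ v, I.map Int.cast *ᵥ Estar v = -Pi.single v 1)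
    (hL : ∀ e, degG I e = 1 → IsLeg I e (s e) (p e)) {x : V → ℚ}
    (hint : ∀ v, ∃ m : ℤ, x v = m) (cf : V → ℤ)
    (hx : x = ∑ u ∈ Finset.univ.filter (fun u => 3 ≤ degG I u ∨ degG I u = 1),
      (cf u : ℚ) • Estar u)
    (hnodes : ∀ v, 3 ≤ degG I v → x v = 0) :
    ∃! k : {e : V // degG I e = 1} → ℤ, x = ∑ e, (k e : ℚ) • legCycle I (p e) (s e) := by
  have hspan := eq_sum_smul_legCycle hsym hneg Estar hEstar hL cf hx hnodes
  choose k hk using fun e : {e : V // degG I e = 1} => hint (p e 1)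
  refine ⟨k, ?_, fun k' hk' => funext fun e => ?_⟩
  · refine hspan.trans (Finset.sum_congr rfl fun e _ => ?_)
    rw [← hk e, hspan, sum_smul_legCycle_apply_one hsym hL]
  · have := congrFun hk' (p e 1)
    rw [sum_smul_legCycle_apply_one hsym hL, hk e] at this
    exact_mod_cast this.symm

end Ends

end Legs

theorem stmt17_general {V : Type*} [Fintype V] [DecidableEq V]
    (I : Matrix V V ℤ)
    (hsym : I.IsSymm)
    (hnegdef : ∀ x : V → ℚ, x ≠ 0 → ∑ v, ∑ w, x v * (I v w : ℚ) * x w < 0)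
    -- the dual cycles `E_v^*`:
    (Estar : V → V → ℚ)
    (hEstar : ∀ v w, ∑ u, (I w u : ℚ) * Estar v u = if v = w then -1 else 0)
    -- the leg attached to each end `e`: node `nd e`, length `s e`, path `p e`:
    (nd : V → V) (s : V → ℕ) (p : V → ℕ → V)
    (hleg : ∀ e, degG I e = 1 →
      1 ≤ s e ∧ p e 0 = nd e ∧ p e (s e) = e ∧ 3 ≤ degG I (nd e) ∧
      (∀ j, 1 ≤ j → j < s e → degG I (p e j) = 2) ∧
      (∀ j < s e, I (p e j) (p e (j + 1)) = 1) ∧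
      Function.Injective (fun j : Fin (s e + 1) => p e j))
    -- `α_e` = (absolute value of the) determinant of the leg:
    (α : V → ℚ)
    (hα : ∀ e, degG I e = 1 →
      α e = |Matrix.det (Matrix.of fun i j : Fin (s e) =>
        ((I (p e (i.1 + 1)) (p e (j.1 + 1)) : ℤ) : ℚ))|)
    -- the cycles `D_e = α_e E_e^* - E_{n_e}^*`:
    (D : V → V → ℚ)
    (hD : ∀ e, D e = fun v => α e * Estar e v - Estar (nd e) v) :
    (∀ e, degG I e = 1 →
      (∀ v, ∃ m : ℤ, D e v = (m : ℚ)) ∧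
      (∀ v, (∃ j, 1 ≤ j ∧ j ≤ s e ∧ v = p e j) → 0 < D e v) ∧
      (∀ v, (¬ ∃ j, 1 ≤ j ∧ j ≤ s e ∧ v = p e j) → D e v = 0) ∧
      D e (p e 1) = 1) ∧
    (∀ x : V → ℚ,
      (∀ v, ∃ m : ℤ, x v = (m : ℚ)) →
      (∃ cf : V → ℤ, x = fun v =>
        ∑ u ∈ Finset.univ.filter (fun u => 3 ≤ degG I u ∨ degG I u = 1),
          (cf u : ℚ) * Estar u v) →
      (∀ nn, 3 ≤ degG I nn → x nn = 0) →
      ∃! k : {e : V // degG I e = 1} → ℤ,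
        x = fun v => ∑ e : {e : V // degG I e = 1}, (k e : ℚ) * D e.1 v) := by
  have hneg : ∀ x : V → ℚ, x ≠ 0 → x ⬝ᵥ (I.map Int.cast *ᵥ x) < 0 := fun x hx =>
    sum_sum_mul_mul_eq_dotProduct_mulVec I x ▸ hnegdef x hx
  have hEstar' : ∀ v, I.map Int.cast *ᵥ Estar v = -Pi.single v 1 := fun v =>
    mulVec_eq_neg_single I (hEstar v)
  have hL : ∀ e, degG I e = 1 → IsLeg I e (s e) (p e) := fun e he => by
    obtain ⟨h1, h0, hs, hnd, h2, hadj, hinj⟩ := hleg e he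
    exact ⟨h1, hs, he, h0 ▸ hnd, h2, hadj, hinj⟩
  have hDe : ∀ e, degG I e = 1 → D e = legCycle I (p e) (s e) := fun e he => by
    rw [hD e, ← (hleg e he).2.1, hα e he]
    exact (hL e he).abs_det_smul_sub_eq_legCycle hsym hneg hEstar'
  refine ⟨fun e he => ?_, fun x hint ⟨cf, hx⟩ hnodes => ?_⟩
  · rw [hDe e he]
    exact ⟨fun v => exists_intCast_eq_legCycle_apply.imp fun _ h => h.symm,
      fun v ⟨j, h1, hj, hv⟩ => hv ▸ (hL e he).legCycle_apply_pos hsym hneg h1 hj,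
      fun v hv => legCycle_apply_of_forall_ne fun j h1 hj h => hv ⟨j, h1, hj, h⟩,
      (hL e he).legCycle_apply_one⟩
  · have hsum : ∀ k : {e : V // degG I e = 1} → ℤ,
        (fun v => ∑ e : {e : V // degG I e = 1}, (k e : ℚ) * D e.1 v)
          = ∑ e, (k e : ℚ) • legCycle I (p e) (s e) := fun k => funext fun v => by
      simp only [Finset.sum_apply, Pi.smul_apply, smul_eq_mul]
      exact Finset.sum_congr rfl fun e _ => by rw [hDe e e.2]
    simp only [hsum]
    refine existsUnique_sum_smul_legCycle hsym hneg Estar hEstar' hL hint cf ?_ hnodes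
    rw [hx]
    funext v
    simp [Finset.sum_apply]

/-- Leg cycles `D_e = α_e E_e^* - E_{n_e}^*`.  Let `G` be a connected negative definite tree
(so the plumbed manifold is a rational homology sphere), with nodes `𝒩 = {δ ≥ 3}` and ends
`ℰ = {δ = 1}`.  For an end `e`, let `n_e = nd e` be its node and `p_e 0 = n_e, …, p_e (s_e) = e`
the leg joining them (interior vertices of valency `2`); `α_e` is the determinant of the leg
(the numerator of the negative continued fraction `α_e/β_e` of its self-intersections), and
`E_v^*` is defined by `(E_v^*, E_w) = -δ_{vw}`.  Then `D_e` is an effective integral cycle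
supported exactly on the leg, with multiplicity `1` at the neighbour `u_e = p_e 1` of `n_e`;
moreover the family `(D_e)_{e ∈ ℰ}` is a `ℤ`-basis of the kernel of the restriction map
`V_Z → V_Z^𝒩`, where `V_Z = ℤ⟨E_v^* : v ∈ 𝒩 ∪ ℰ⟩ ∩ L`. -/
theorem stmt17 {V : Type*} [Fintype V] [DecidableEq V]
    (I : Matrix V V ℤ)
    (hsym : I.IsSymm)
    (hdiag : ∀ v : V, I v v < 0)
    (hoff : ∀ v w : V, v ≠ w → I v w = 0 ∨ I v w = 1)
    (hnegdef : ∀ x : V → ℚ, x ≠ 0 → ∑ v, ∑ w, x v * (I v w : ℚ) * x w < 0)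
    (hconn : ∀ v w : V, Relation.ReflTransGen (fun a b : V => a ≠ b ∧ I a b ≠ 0) v w)
    (htree : ∑ q ∈ (Finset.univ : Finset (V × V)).filter (fun q => q.1 ≠ q.2), I q.1 q.2
      = 2 * ((Fintype.card V : ℤ) - 1))
    (hnode : ∃ v, 3 ≤ degG I v)
    -- the dual cycles `E_v^*`:
    (Estar : V → V → ℚ)
    (hEstar : ∀ v w, ∑ u, (I w u : ℚ) * Estar v u = if v = w then -1 else 0)
    -- the leg attached to each end `e`: node `nd e`, length `s e`, path `p e`:
    (nd : V → V) (s : V → ℕ) (p : V → ℕ → V)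
    (hleg : ∀ e, degG I e = 1 →
      1 ≤ s e ∧ p e 0 = nd e ∧ p e (s e) = e ∧ 3 ≤ degG I (nd e) ∧
      (∀ j, 1 ≤ j → j < s e → degG I (p e j) = 2) ∧
      (∀ j < s e, I (p e j) (p e (j + 1)) = 1) ∧
      Function.Injective (fun j : Fin (s e + 1) => p e j))
    -- `α_e` = (absolute value of the) determinant of the leg:
    (α : V → ℚ)
    (hα : ∀ e, degG I e = 1 →
      α e = |Matrix.det (Matrix.of fun i j : Fin (s e) =>
        ((I (p e (i.1 + 1)) (p e (j.1 + 1)) : ℤ) : ℚ))|)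
    -- the cycles `D_e = α_e E_e^* - E_{n_e}^*`:
    (D : V → V → ℚ)
    (hD : ∀ e, D e = fun v => α e * Estar e v - Estar (nd e) v) :
    (∀ e, degG I e = 1 →
      (∀ v, ∃ m : ℤ, D e v = (m : ℚ)) ∧
      (∀ v, (∃ j, 1 ≤ j ∧ j ≤ s e ∧ v = p e j) → 0 < D e v) ∧
      (∀ v, (¬ ∃ j, 1 ≤ j ∧ j ≤ s e ∧ v = p e j) → D e v = 0) ∧
      D e (p e 1) = 1) ∧
    (∀ x : V → ℚ,
      (∀ v, ∃ m : ℤ, x v = (m : ℚ)) →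
      (∃ cf : V → ℤ, x = fun v =>
        ∑ u ∈ Finset.univ.filter (fun u => 3 ≤ degG I u ∨ degG I u = 1),
          (cf u : ℚ) * Estar u v) →
      (∀ nn, 3 ≤ degG I nn → x nn = 0) →
      ∃! k : {e : V // degG I e = 1} → ℤ,
        x = fun v => ∑ e : {e : V // degG I e = 1}, (k e : ℚ) * D e.1 v) :=
  stmt17_general I hsym hnegdef Estar hEstar nd s p hleg α hα D hD
end
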